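/- arXiv:0905.1642 — 12 statements merged into one kernel-verified Lean document; each statement's English description precedes it below -/
import Mathlib

section
/- Let M be a finite field, K a subfield of M such that the degree [M:K] is a power of a prime number, and let α ∈ M be a generator of M over K (i.e. K(α) = M). Let L be an intermediate field, K ⊆ L ⊆ M, and let d = [M:L]. Let Σ₁, …, Σ_d be the d symmetric functions of α over L, i.e. the coefficients of the characteristic polynomial of α viewed as an element of the L-algebra M (equivalently, of the minimal polynomial of α over L, which has degree d). Then at least one of Σ₁, …, Σ_d generates L over K, i.e. K(Σ_k) = L for some k with 1 ≤ k ≤ d. -/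
open Polynomial Module

private lemma pow_pow_stab {M : Type*} [Monoid M] {x : M} {s : ℕ} (h : x ^ s = x) (t : ℕ) :
    x ^ s ^ t = x := by
  induction t with
  | zero => simp
  | succ t ih => rw [pow_succ, pow_mul, ih, h]

/-- Let `M` be a finite field, `K` a subfield of `M` such that `[M:K]`
is a power of a prime, and `α ∈ M` a generator of `M` over `K`. Let `L` be an intermediate
field and `d = [M:L]`. Then one of the `d` symmetric functions of `α` over `L` (the
coefficients of the characteristic polynomial of multiplication by `α` on the `L`-vector
space `M`) generates `L` over `K`. -/
theorem symmetric_function_generates_of_finite_field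
    (K L M : Type*) [Field K] [Field L] [Field M]
    [Finite K] [Finite L] [Finite M]
    [Algebra K L] [Algebra L M] [Algebra K M] [IsScalarTower K L M]
    (p n : ℕ) (hp : p.Prime) (hdeg : Module.finrank K M = p ^ n)
    (α : M) (hα : IntermediateField.adjoin K ({α} : Set M) = ⊤)
    (d : ℕ) (hd : d = Module.finrank L M) :
    ∃ k, 1 ≤ k ∧ k ≤ d ∧
      IntermediateField.adjoin K
        ({(LinearMap.charpoly (LinearMap.mulLeft L α)).coeff (d - k)} : Set L) = ⊤ := by
  classical
  letI : Fintype K := Fintype.ofFinite K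
  letI : Fintype L := Fintype.ofFinite L
  letI : Fintype M := Fintype.ofFinite M
  by_contra hcon
  push_neg at hcon
  set P := LinearMap.charpoly (LinearMap.mulLeft L α) with hPdef
  have hd1 : 1 ≤ d := by rw [hd]; exact Module.finrank_pos
  have hcon' : ∀ i < d, IntermediateField.adjoin K ({P.coeff i} : Set L) ≠ ⊤ := by
    intro i hi
    have h := hcon (d - i) (by omega) (by omega)
    rwa [Nat.sub_sub_self (le_of_lt hi)] at h
  -- dispose of the case [L:K] = 1
  have hKL1 : Module.finrank K L ≠ 1 := by
    intro h1
    have hbot : (⊥ : IntermediateField K L) = ⊤ := by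
      symm
      rw [← IntermediateField.finrank_eq_one_iff, IntermediateField.finrank_top', h1]
    exact hcon' 0 (by omega) (by rw [← top_le_iff, ← hbot]; exact bot_le)
  have hPmonic : P.Monic := LinearMap.charpoly_monic _
  have hPdeg : P.natDegree = d := by
    rw [hd]; exact LinearMap.charpoly_natDegree _
  have hroot : Polynomial.aeval α P = 0 := by
    have h1 : Polynomial.aeval (LinearMap.mulLeft L α) P = 0 :=
      LinearMap.aeval_self_charpoly _
    have h2 : LinearMap.mulLeft L α = Algebra.lmul L M α := by ext b; rfl
    rw [h2, Polynomial.aeval_algHom_apply] at h1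
    have h3 := congrArg (fun g => g 1) h1
    simpa using h3
  -- cardinalities
  set q : ℕ := Fintype.card K with hqdef
  have hq2 : 2 ≤ q := Fintype.one_lt_card
  have hcardL : Fintype.card L = q ^ finrank K L := card_eq_pow_finrank
  have htowerKL : finrank K L * finrank L M = finrank K M := Module.finrank_mul_finrank K L M
  have hdvdL : finrank K L ∣ p ^ n := ⟨finrank L M, by rw [← hdeg, ← htowerKL]⟩
  obtain ⟨m, hmn, hm⟩ := (Nat.dvd_prime_pow hp).mp hdvdL
  have hm1 : 1 ≤ m := by
    rcases Nat.eq_zero_or_pos m with h0 | h; · exact absurd (by rw [hm, h0, pow_zero]) hKL1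
    omega
  -- characteristic
  set π := ringChar K with hπdef
  obtain ⟨e₀, hπ, hqcard⟩ := FiniteField.card K π
  haveI : CharP M π := charP_of_injective_algebraMap (algebraMap K M).injective π
  haveI : ExpChar M π := ExpChar.prime hπ
  set t : ℕ := (e₀ : ℕ) * p ^ (m - 1) with htdef
  set r : ℕ := q ^ p ^ (m - 1) with hrdef
  have hrt : π ^ t = r := by rw [htdef, hrdef, hqdef, hqcard, ← pow_mul]
  have hr1 : 1 ≤ r := Nat.one_le_pow _ _ (by omega)
  have hrq : q ≤ r := by
    calc q = q ^ 1 := (pow_one q).symm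
    _ ≤ q ^ p ^ (m - 1) := Nat.pow_le_pow_right (by omega) (Nat.one_le_pow _ _ hp.pos)
  set φ : M →+* M := iterateFrobenius M π t with hφdef
  have hφ : ∀ x : M, φ x = x ^ r := fun x => by rw [hφdef, iterateFrobenius_def, hrt]
  -- the subfield of elements fixed by x ↦ x ^ r
  set Gs : Subfield M :=
    { carrier := {x : M | x ^ r = x}
      mul_mem' := fun {a b} ha hb => by
        simp only [Set.mem_setOf_eq] at *; rw [mul_pow, ha, hb]
      one_mem' := one_pow r
      add_mem' := fun {a b} ha hb => by
        simp only [Set.mem_setOf_eq] at *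
        have hadd := map_add φ a b
        rw [hφ, hφ, hφ, ha, hb] at hadd
        exact hadd
      zero_mem' := zero_pow (by omega)
      neg_mem' := fun {a} ha => by
        simp only [Set.mem_setOf_eq] at *
        have hneg := map_neg φ a
        rw [hφ, hφ, ha] at hneg
        exact hneg
      inv_mem' := fun x hx => by
        simp only [Set.mem_setOf_eq] at *; rw [inv_pow, hx] } with hGsdef
  have hGsmem : ∀ x : M, x ∈ Gs ↔ x ^ r = x := fun x => Iff.rfl
  set G : IntermediateField K M := Gs.toIntermediateField (fun x => by
    rw [hGsmem]
    have hxq : (algebraMap K M x) ^ q = algebraMap K M x := by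
      rw [hqdef, ← map_pow, FiniteField.pow_card]
    rw [hrdef]
    exact pow_pow_stab hxq _) with hGdef
  have hGmem : ∀ x : M, x ∈ G ↔ x ^ r = x := fun x => Iff.rfl
  -- the image of L in M
  set f : L →ₐ[K] M := IsScalarTower.toAlgHom K L M with hfdef
  set LM : IntermediateField K M := (⊤ : IntermediateField K L).map f with hLMdef
  have hLMcard : Nat.card LM = q ^ p ^ m := by
    have h0 : Nat.card LM = (LM : Set M).ncard := Nat.card_coe_set_eq _
    have h1 : (LM : Set M) = f '' Set.univ := by
      rw [hLMdef, IntermediateField.coe_map, IntermediateField.coe_top]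
    have hfinj : Function.Injective (⇑f : L → M) := f.injective
    rw [h0, h1, Set.ncard_image_of_injective _ hfinj,
      Set.ncard_univ, Nat.card_eq_fintype_card, hcardL, hm]
  -- each low coefficient of P, pushed to M, lies in G
  have hcoeffG : ∀ i < d, algebraMap L M (P.coeff i) ∈ G := by
    intro i hi
    set c : M := algebraMap L M (P.coeff i) with hcdef
    set A : IntermediateField K M := IntermediateField.adjoin K ({c} : Set M) with hAdef
    have hcA : c ∈ A := IntermediateField.mem_adjoin_simple_self K c
    have hcLM : c ∈ LM := by
      rw [hLMdef]
      exact ⟨P.coeff i, trivial, rfl⟩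
    have hAle : A ≤ LM := by
      rw [hAdef, IntermediateField.adjoin_le_iff]
      rintro x hx
      rw [Set.mem_singleton_iff] at hx
      subst hx
      exact hcLM
    have hAne : A ≠ LM := by
      intro hEq
      apply hcon' i hi
      apply IntermediateField.map_injective f
      rw [IntermediateField.adjoin_map, Set.image_singleton, ← hLMdef, ← hEq, hAdef]
      rfl
    have hAcard : Nat.card A = q ^ finrank K A := by
      letI : Fintype A := Fintype.ofFinite _
      rw [Nat.card_eq_fintype_card]
      exact card_eq_pow_finrank
    have hcardlt : Nat.card A < Nat.card LM := by
      have h1 : Nat.card A = (A : Set M).ncard := Nat.card_coe_set_eq _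
      have h2 : Nat.card LM = (LM : Set M).ncard := Nat.card_coe_set_eq _
      rw [h1, h2]
      exact Set.ncard_lt_ncard
        (SetLike.coe_ssubset_coe.mpr (lt_of_le_of_ne hAle hAne)) (Set.toFinite _)
    have hdvdA : finrank K A ∣ p ^ n :=
      ⟨finrank A M, by rw [← hdeg, ← Module.finrank_mul_finrank K A M]⟩
    obtain ⟨e, hen, he⟩ := (Nat.dvd_prime_pow hp).mp hdvdA
    have hem : e < m := by
      rw [hAcard, hLMcard, he] at hcardlt
      have h1 : p ^ e < p ^ m :=
        (Nat.pow_lt_pow_iff_right (by omega : 1 < q)).mp hcardlt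
      exact (Nat.pow_lt_pow_iff_right hp.one_lt).mp h1
    have hc1 : c ^ q ^ p ^ e = c := by
      letI : Fintype A := Fintype.ofFinite _
      have h2 := congrArg (Subtype.val) (FiniteField.pow_card (⟨c, hcA⟩ : A))
      rw [← he, ← hAcard, Nat.card_eq_fintype_card]
      simpa using h2
    have hc2 : c ^ (q ^ p ^ e) ^ p ^ (m - 1 - e) = c := pow_pow_stab hc1 _
    rw [hGmem, hrdef]
    have h3 : (q ^ p ^ e) ^ p ^ (m - 1 - e) = q ^ p ^ (m - 1) := by
      rw [← pow_mul, ← pow_add]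
      congr 1
      congr 1
      omega
    rwa [h3] at hc2
  -- the polynomial over G
  set Q : M[X] := P.map (algebraMap L M) with hQdef
  have hQmonic : Q.Monic := hPmonic.map _
  have hQdeg : Q.natDegree = d := by rw [hQdef, Polynomial.natDegree_map, hPdeg]
  have hQcoeff : ∀ i, Q.coeff i ∈ G := by
    intro i
    rcases lt_trichotomy i d with h | h | h
    · rw [hQdef, Polynomial.coeff_map]; exact hcoeffG i h
    · have h1 : Q.coeff i = 1 := by
        subst h; rw [← hQdeg]; exact hQmonic.coeff_natDegree
      rw [h1]; exact one_mem G
    · have h1 : Q.coeff i = 0 :=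
        Polynomial.coeff_eq_zero_of_natDegree_lt (by omega)
      rw [h1]; exact zero_mem G
  set qpoly : Polynomial G :=
    ∑ i ∈ Finset.range (d + 1), Polynomial.C (⟨Q.coeff i, hQcoeff i⟩ : G) * Polynomial.X ^ i
    with hqpdef
  have hqmap : qpoly.map (algebraMap G M) = Q := by
    rw [hqpdef, Polynomial.map_sum]
    simp only [Polynomial.map_mul, Polynomial.map_C, Polynomial.map_pow, Polynomial.map_X]
    have h1 : ∀ (x : G), algebraMap G M x = (x : M) := fun x => rfl
    simp only [h1]
    simp only [Polynomial.C_mul_X_pow_eq_monomial]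
    exact (Q.as_sum_range' (d + 1) (by omega)).symm
  have hq0 : qpoly ≠ 0 := by
    intro h0
    rw [h0, Polynomial.map_zero] at hqmap
    exact hQmonic.ne_zero hqmap.symm
  have hqaeval : Polynomial.aeval α qpoly = 0 := by
    have h1 : Polynomial.aeval α qpoly = Q.eval α := by
      rw [Polynomial.aeval_def, ← Polynomial.eval_map, hqmap]
    rw [h1, hQdef, Polynomial.eval_map, ← Polynomial.aeval_def]
    exact hroot
  have hqdeg : qpoly.natDegree = d := by
    rw [← hQdeg, ← hqmap, Polynomial.natDegree_map]
  -- finrank G M ≤ d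
  have hGtop : IntermediateField.adjoin G ({α} : Set M) = ⊤ :=
    IntermediateField.adjoin_eq_top_of_adjoin_eq_top K hα
  have hint : IsIntegral G α := .of_finite G α
  have hfinrankG : finrank G M ≤ d := by
    have h1 := IntermediateField.adjoin.finrank hint
    rw [hGtop, IntermediateField.finrank_top'] at h1
    rw [h1]
    have h2 := minpoly.degree_le_of_ne_zero G α hq0 hqaeval
    have h3 := Polynomial.natDegree_le_natDegree h2
    omega
  -- card G ≤ r
  have hGcard : Nat.card G ≤ r := by
    set fpoly : M[X] := Polynomial.X ^ r - Polynomial.X with hfpdef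
    have hrne1 : r ≠ 1 := by omega
    have hcoeffr : fpoly.coeff r = 1 := by
      rw [hfpdef, Polynomial.coeff_sub, Polynomial.coeff_X_pow, if_pos rfl,
        Polynomial.coeff_X_of_ne_one hrne1, sub_zero]
    have hfne : fpoly ≠ 0 := by
      intro h0
      rw [h0, Polynomial.coeff_zero] at hcoeffr
      exact one_ne_zero hcoeffr.symm
    have hfdeg : fpoly.natDegree ≤ r := by
      rw [hfpdef]
      refine le_trans (Polynomial.natDegree_sub_le _ _) ?_
      rw [Polynomial.natDegree_X_pow, Polynomial.natDegree_X]
      exact max_le (le_refl r) (by omega)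
    have hmemroots : ∀ x : M, x ∈ G → x ∈ fpoly.roots := by
      intro x hx
      rw [Polynomial.mem_roots hfne]
      rw [hGmem] at hx
      simp [hfpdef, Polynomial.IsRoot, hx]
    letI : Fintype (G : Set M) := Fintype.ofFinite _
    calc Nat.card G = (G : Set M).toFinset.card := by
          have h0 : Nat.card G = (G : Set M).ncard := Nat.card_coe_set_eq _
          rw [h0, Set.ncard_eq_toFinset_card']
      _ ≤ fpoly.roots.toFinset.card := by
          apply Finset.card_le_card
          intro x hx
          rw [Set.mem_toFinset] at hx
          rw [Multiset.mem_toFinset]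
          exact hmemroots x hx
      _ ≤ Multiset.card fpoly.roots := Multiset.toFinset_card_le _
      _ ≤ fpoly.natDegree := fpoly.card_roots'
      _ ≤ r := hfdeg
  -- final contradiction
  have hMG : Nat.card M = Nat.card G ^ finrank G M := by
    letI : Fintype G := Fintype.ofFinite _
    rw [Nat.card_eq_fintype_card, Nat.card_eq_fintype_card]
    exact card_eq_pow_finrank
  have hML : Nat.card M = (q ^ p ^ m) ^ d := by
    rw [Nat.card_eq_fintype_card, card_eq_pow_finrank (K := L) (V := M), hcardL, hm, hd]
  have hrlt : r < q ^ p ^ m := by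
    rw [hrdef]
    exact Nat.pow_lt_pow_right (by omega) (Nat.pow_lt_pow_right hp.one_lt (by omega))
  have hfinal : Nat.card M < (q ^ p ^ m) ^ d := by
    calc Nat.card M = Nat.card G ^ finrank G M := hMG
      _ ≤ Nat.card G ^ d := Nat.pow_le_pow_right Nat.card_pos hfinrankG
      _ ≤ r ^ d := Nat.pow_le_pow_left hGcard d
      _ < (q ^ p ^ m) ^ d := Nat.pow_lt_pow_left hrlt (by omega)
  rw [hML] at hfinal
  exact lt_irrefl _ hfinal
end

section
/- Let M be a field and K a subfield of M such that M = K(α) for some α ∈ M. Let L be a subfield of M containing K such that the extension M/L is Galois, cyclic, of finite degree d. Assume there exists a proper subfield S of L containing K such that every proper subfield of L containing K is contained in S. Let Σ₁, …, Σ_d be the coefficients of the characteristic polynomial of α viewed as an element of the L-algebra M. Then at least one of Σ₁, …, Σ_d generates L over K, i.e. K(Σ_k) = L for some k with 1 ≤ k ≤ d. -/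
open Polynomial IntermediateField Module


/-- Let `M = K(α)` be a monogenous field extension, `L` an intermediate
field with `M/L` Galois, cyclic, of finite degree `d`. Assume `L/K` has a (unique) maximal
proper intermediate field `S`. Then one of the `d` coefficients of the characteristic
polynomial of `α` (as an element of the `L`-algebra `M`) generates `L` over `K`. -/
theorem symmetric_function_generates
    (K L M : Type*) [Field K] [Field L] [Field M]
    [Algebra K L] [Algebra L M] [Algebra K M] [IsScalarTower K L M]
    (α : M) (hα : IntermediateField.adjoin K ({α} : Set M) = ⊤)
    [IsGalois L M] [FiniteDimensional L M] [IsCyclic (M ≃ₐ[L] M)]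
    (d : ℕ) (hd : d = Module.finrank L M)
    (S : IntermediateField K L) (hS : S ≠ ⊤)
    (hSmax : ∀ T : IntermediateField K L, T ≠ ⊤ → T ≤ S) :
    ∃ k, 1 ≤ k ∧ k ≤ d ∧
      IntermediateField.adjoin K
        ({(LinearMap.charpoly (LinearMap.mulLeft L α)).coeff (d - k)} : Set L) = ⊤ := by
  by_contra hcon
  push_neg at hcon
  set p := LinearMap.charpoly (LinearMap.mulLeft L α) with hp
  have hd1 : 1 ≤ d := hd ▸ Module.finrank_pos
  have hpdeg : p.natDegree = d := by
    rw [hp, LinearMap.charpoly_natDegree, hd]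
  have hpmonic : p.Monic := LinearMap.charpoly_monic _
  -- coefficients lie in S
  have hcoeff : ∀ n, p.coeff n ∈ Set.range (algebraMap ↥S L) := by
    intro n
    rcases lt_trichotomy n d with h | h | h
    · have hk : 1 ≤ d - n ∧ d - n ≤ d := ⟨by omega, by omega⟩
      have := hSmax _ (hcon (d - n) hk.1 hk.2)
      have hmem : p.coeff (d - (d - n)) ∈ S := by
        refine this ?_
        exact IntermediateField.mem_adjoin_simple_self K _
      rw [show d - (d - n) = n by omega] at hmem
      exact ⟨⟨_, hmem⟩, rfl⟩
    · subst h
      have : p.coeff n = 1 := by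
        have := hpmonic.coeff_natDegree
        rwa [hpdeg] at this
      exact ⟨1, by simp [this]⟩
    · have : p.coeff n = 0 := coeff_eq_zero_of_natDegree_lt (by omega)
      exact ⟨0, by simp [this]⟩
  have hlift : p ∈ Polynomial.lifts (algebraMap ↥S L) :=
    (Polynomial.lifts_iff_coeff_lifts p).2 hcoeff
  obtain ⟨q, hqmap, hqdeg, hqmonic⟩ :=
    Polynomial.lifts_and_degree_eq_and_monic hlift hpmonic
  -- α is a root of p (Cayley-Hamilton)
  have haeval : Polynomial.aeval α p = 0 := by
    have h0 : Polynomial.aeval (LinearMap.mulLeft L α) p = 0 :=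
      LinearMap.aeval_self_charpoly _
    have hml : LinearMap.mulLeft L α = Algebra.lmul L M α := rfl
    rw [hml, Polynomial.aeval_algHom_apply] at h0
    have := congrArg (fun f : Module.End L M => f 1) h0
    simpa using this
  have haevalq : Polynomial.aeval α q = 0 := by
    have : Polynomial.aeval α (q.map (algebraMap ↥S L)) = 0 := by rw [hqmap]; exact haeval
    rwa [Polynomial.aeval_map_algebraMap] at this
  have hint : IsIntegral ↥S α := ⟨q, hqmonic, haevalq⟩
  -- adjoin S α = ⊤
  have hadj : IntermediateField.adjoin ↥S ({α} : Set M) = ⊤ := by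
    apply IntermediateField.restrictScalars_injective K
    rw [IntermediateField.restrictScalars_top]
    rw [eq_top_iff, ← hα, IntermediateField.adjoin_le_iff]
    intro x hx
    rw [Set.mem_singleton_iff] at hx
    subst hx
    exact IntermediateField.mem_adjoin_simple_self ↥S x
  -- finiteness
  have hfinSM : FiniteDimensional ↥S M := by
    have := IntermediateField.adjoin.finiteDimensional hint
    rw [hadj] at this
    exact FiniteDimensional.of_injective
      (IntermediateField.topEquiv (F := ↥S) (E := M)).symm.toLinearMap
      (IntermediateField.topEquiv (F := ↥S) (E := M)).symm.injective
  have hfinSL : FiniteDimensional ↥S L :=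
    FiniteDimensional.of_injective (IsScalarTower.toAlgHom ↥S L M).toLinearMap
      (algebraMap L M).injective
  -- finrank S M ≤ d
  have hle : finrank ↥S M ≤ d := by
    have h1 : finrank ↥S ↥(IntermediateField.adjoin ↥S ({α} : Set M))
        = (minpoly ↥S α).natDegree := IntermediateField.adjoin.finrank hint
    rw [hadj, IntermediateField.finrank_top'] at h1
    rw [h1]
    have hdvd : minpoly ↥S α ∣ q := minpoly.dvd _ _ haevalq
    have : (minpoly ↥S α).natDegree ≤ q.natDegree :=
      Polynomial.natDegree_le_of_dvd hdvd hqmonic.ne_zero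
    have hqnd : q.natDegree = d := by
      have := Polynomial.natDegree_eq_of_degree_eq hqdeg
      omega
    omega
  -- tower
  have htow : finrank ↥S L * finrank L M = finrank ↥S M := Module.finrank_mul_finrank _ _ _
  have hSL2 : 2 ≤ finrank ↥S L := by
    by_contra hlt
    push_neg at hlt
    have hpos : 0 < finrank ↥S L := finrank_pos
    have h1 : finrank ↥S L = 1 := by omega
    apply hS
    rw [eq_top_iff]
    intro w _
    obtain ⟨c, hc⟩ := (finrank_eq_one_iff_of_nonzero' (1 : L) one_ne_zero).1 h1 w
    have : (c : L) = w := by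
      rw [← hc]; simp [Algebra.smul_def]
    rw [← this]; exact c.2
  rw [← htow, ← hd] at hle
  nlinarith
end

section
/- Let K be a finite field with q elements and let d ≥ 2 be an integer. Then the number of monic irreducible polynomials of degree d in K[x] is at least q^d/d − (q/(d(q−1)))·(q^{d/2} − 1), where q^{d/2} denotes the real number q raised to the power d/2. -/
/-!
Let `L` be the extension of degree `d` of `K`, so `#L = q ^ d`, and sort the elements of `L` by
the degree `e` of their minimal polynomial over `K`, which divides `d`. An element with `e = d` is
a root of a monic irreducible polynomial of degree `d`, and each such polynomial has at most `d`
roots. An element with `e < d` is a root of `X ^ q ^ e - X`, where `e ≤ d / 2` is a proper divisor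
of `d`, so there are at most `∑_{1 ≤ e ≤ d/2} q ^ e ≤ q (q ^ (d/2) - 1) / (q - 1)` of them.
-/

open Polynomial Finset

theorem Nat.le_div_two_of_mem_properDivisors {d e : ℕ} (h : e ∈ d.properDivisors) :
    e ≤ d / 2 := by
  obtain ⟨⟨k, rfl⟩, hlt⟩ := Nat.mem_properDivisors.mp h
  have hk : 2 ≤ k := by
    by_contra! hk
    interval_cases k <;> omega
  rw [Nat.le_div_iff_mul_le two_pos]
  exact Nat.mul_le_mul_left e hk

theorem Polynomial.finite_setOf_natDegree_le (R : Type*) [Semiring R] [Finite R] (n : ℕ) :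
    {p : R[X] | p.natDegree ≤ n}.Finite := by
  refine Set.Finite.of_finite_image (f := fun p (i : Fin (n + 1)) ↦ p.coeff i)
    (Set.toFinite _) fun p hp q hq hpq ↦ (ext_iff_natDegree_le hp hq).mpr fun i hi ↦ ?_
  exact congrFun hpq ⟨i, Nat.lt_succ_of_le hi⟩

theorem Polynomial.card_filter_aeval_eq_zero_le_natDegree {R L : Type*} [CommRing R]
    [CommRing L] [IsDomain L] [Algebra R L] [Fintype L] [DecidableEq L] {f : R[X]}
    (hf : f.map (algebraMap R L) ≠ 0) :
    #{x : L | aeval x f = 0} ≤ f.natDegree :=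
  calc #{x : L | aeval x f = 0}
      ≤ #(f.aroots L).toFinset := card_le_card fun x hx ↦ by
        rw [Multiset.mem_toFinset, mem_roots hf, IsRoot, eval_map_algebraMap]
        exact (mem_filter.mp hx).2
    _ ≤ Multiset.card (f.aroots L) := Multiset.toFinset_card_le _
    _ ≤ f.natDegree := card_roots_map_le_natDegree f

section minpoly

variable (K L : Type*) [Field K] [Field L] [Algebra K L] [Fintype L]

theorem card_filter_natDegree_minpoly_eq_le_mul_card [Finite K] (n : ℕ) :
    #{x : L | (minpoly K x).natDegree = n} ≤
      n * Nat.card {f : K[X] // f.Monic ∧ f.natDegree = n ∧ Irreducible f} := by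
  classical
  set P : Set K[X] := {f | f.Monic ∧ f.natDegree = n ∧ Irreducible f}
  have hP : P.Finite := (finite_setOf_natDegree_le K n).subset fun f hf ↦ hf.2.1.le
  rw [← Set.coe_ofPred, Nat.card_coe_set_eq, Set.ncard_eq_toFinset_card P hP]
  refine card_le_mul_card_image_of_maps_to (f := minpoly K) (fun x hx ↦ ?_) n fun f hf ↦ ?_
  · have hx' : IsIntegral K x := .of_finite K x
    simp only [Set.Finite.mem_toFinset, P, Set.mem_ofPred_eq]
    exact ⟨minpoly.monic hx', (mem_filter.mp hx).2, minpoly.irreducible hx'⟩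
  · obtain ⟨-, hfn, hirr⟩ := (Set.Finite.mem_toFinset hP).mp hf
    calc #{x ∈ {x : L | (minpoly K x).natDegree = n} | minpoly K x = f}
        ≤ #{x : L | aeval x f = 0} := card_le_card fun x hx ↦ by
          obtain ⟨-, rfl⟩ := mem_filter.mp hx
          exact mem_filter.mpr ⟨mem_univ x, minpoly.aeval K x⟩
      _ ≤ n := hfn ▸ card_filter_aeval_eq_zero_le_natDegree (map_ne_zero hirr.ne_zero)

theorem card_filter_natDegree_minpoly_eq_le_pow [Finite K] {e : ℕ} (he : e ≠ 0) :
    #{x : L | (minpoly K x).natDegree = e} ≤ Nat.card K ^ e := by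
  classical
  have hK : 1 < Nat.card K := Finite.one_lt_card
  calc #{x : L | (minpoly K x).natDegree = e}
      ≤ #{x : L | aeval x (X ^ Nat.card K ^ e - X : K[X]) = 0} := card_le_card fun x hx ↦ by
        have hirr := minpoly.irreducible (IsIntegral.of_finite K x)
        have hdvd := hirr.natDegree_dvd_iff_dvd_X_pow_card_pow_sub_X.mp
          (dvd_of_eq (mem_filter.mp hx).2)
        exact mem_filter.mpr
          ⟨mem_univ x, aeval_eq_zero_of_dvd_aeval_eq_zero hdvd (minpoly.aeval K x)⟩
    _ ≤ Nat.card K ^ e :=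
        (card_filter_aeval_eq_zero_le_natDegree
          (map_ne_zero (FiniteField.X_pow_card_pow_sub_X_ne_zero K he hK))).trans
          (FiniteField.X_pow_card_pow_sub_X_natDegree_eq K he hK).le

theorem card_eq_sum_divisors_card_filter_natDegree_minpoly :
    Fintype.card L = ∑ e ∈ (Module.finrank K L).divisors,
      #{x : L | (minpoly K x).natDegree = e} :=
  card_eq_sum_card_fiberwise fun x _ ↦ Nat.mem_divisors.mpr
    ⟨minpoly.degree_dvd (.of_finite K x), Module.finrank_pos.ne'⟩

end minpoly

theorem FiniteField.pow_le_mul_card_monic_irreducible_add_sum (K : Type*) [Field K] [Finite K]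
    {d : ℕ} (hd : d ≠ 0) :
    Nat.card K ^ d ≤ d * Nat.card {f : K[X] // f.Monic ∧ f.natDegree = d ∧ Irreducible f} +
      ∑ e ∈ Ico 1 (d / 2 + 1), Nat.card K ^ e := by
  obtain ⟨p, _⟩ := CharP.exists K
  have : Fact p.Prime := ⟨CharP.char_is_prime K p⟩
  have : NeZero d := ⟨hd⟩
  let L := Extension K p d
  let : Fintype L := .ofFinite L
  calc Nat.card K ^ d
      = ∑ e ∈ d.divisors, #{x : L | (minpoly K x).natDegree = e} := by
        rw [← natCard_extension K p d, ← Fintype.card_eq_nat_card,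
          card_eq_sum_divisors_card_filter_natDegree_minpoly K L, finrank_extension]
    _ = #{x : L | (minpoly K x).natDegree = d} +
          ∑ e ∈ d.properDivisors, #{x : L | (minpoly K x).natDegree = e} := by
        rw [← Nat.insert_self_properDivisors hd, sum_insert Nat.self_notMem_properDivisors]
    _ ≤ d * Nat.card {f : K[X] // f.Monic ∧ f.natDegree = d ∧ Irreducible f} +
          ∑ e ∈ d.properDivisors, Nat.card K ^ e :=
        add_le_add (card_filter_natDegree_minpoly_eq_le_mul_card K L d) (sum_le_sum fun e he ↦
          card_filter_natDegree_minpoly_eq_le_pow K L (Nat.pos_of_mem_properDivisors he).ne')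
    _ ≤ _ := by
        gcongr
        exact fun e he ↦ mem_Ico.mpr ⟨Nat.pos_of_mem_properDivisors he,
          Nat.lt_succ_of_le (Nat.le_div_two_of_mem_properDivisors he)⟩

theorem sum_Ico_one_pow_le_rpow {x : ℝ} (hx : 1 < x) (n : ℕ) :
    ∑ e ∈ Ico 1 (n / 2 + 1), x ^ e ≤ x * (x ^ ((n : ℝ) / 2) - 1) / (x - 1) := by
  rw [le_div_iff₀ (sub_pos.mpr hx), geom_sum_Ico_mul x (by omega), pow_succ', pow_one,
    ← mul_sub_one]
  gcongr
  rw [← Real.rpow_natCast]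
  exact Real.rpow_le_rpow_of_exponent_le hx.le (by exact_mod_cast Nat.cast_div_le (α := ℝ))

/-- Over a finite field `K` with `q` elements, for `d ≥ 2`, the number of
monic irreducible polynomials of degree `d` in `K[x]` is at least
`q^d/d − (q/(d(q−1)))·(q^{d/2} − 1)`. -/
theorem count_irreducible_ge
    (K : Type*) [Field K] [Fintype K] (q : ℕ) (hq : Fintype.card K = q)
    (d : ℕ) (hd : 2 ≤ d) :
    (q : ℝ) ^ d / d - ((q : ℝ) / (d * ((q : ℝ) - 1))) * ((q : ℝ) ^ ((d : ℝ) / 2) - 1)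
      ≤ Nat.card {f : Polynomial K // f.Monic ∧ f.natDegree = d ∧ Irreducible f} := by
  set N := Nat.card {f : K[X] // f.Monic ∧ f.natDegree = d ∧ Irreducible f}
  rw [Fintype.card_eq_nat_card] at hq
  subst hq
  have hq1 : (1 : ℝ) < Nat.card K := by exact_mod_cast Finite.one_lt_card
  have hd0 : (0 : ℝ) < d := by positivity
  have hcount :
      (Nat.card K : ℝ) ^ d ≤ d * N + ∑ e ∈ Ico 1 (d / 2 + 1), (Nat.card K : ℝ) ^ e := by
    exact_mod_cast FiniteField.pow_le_mul_card_monic_irreducible_add_sum K (by omega : d ≠ 0)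
  have hgeom := sum_Ico_one_pow_le_rpow hq1 d
  calc _ = ((Nat.card K : ℝ) ^ d -
          Nat.card K * (Nat.card K ^ ((d : ℝ) / 2) - 1) / (Nat.card K - 1)) / d := by
        field_simp
    _ ≤ N := by
        rw [div_le_iff₀ hd0]
        linarith
end

section
/- Let K be a finite field with q elements, let d ≥ 2 be an integer, and let L be the field extension of K of degree d (so L has q^d elements). Then the number of elements α ∈ L such that K(α) = L is at least q^d − (q/(q−1))·(q^{d/2} − 1), where q^{d/2} denotes the real number q raised to the power d/2. -/
open Finset Polynomial

/-- Let `K` be a finite field with `q` elements and `L` the extension of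
`K` of degree `d ≥ 2`. The number of `α ∈ L` with `K(α) = L` is at least
`q^d − (q/(q−1))·(q^{d/2} − 1)`. -/
theorem count_generators_ge
    (K L : Type*) [Field K] [Fintype K] [Field L] [Algebra K L]
    (q d : ℕ) (hq : Fintype.card K = q) (hd : 2 ≤ d)
    (hdim : Module.finrank K L = d) :
    (q : ℝ) ^ d - ((q : ℝ) / ((q : ℝ) - 1)) * ((q : ℝ) ^ ((d : ℝ) / 2) - 1)
      ≤ Nat.card {α : L // IntermediateField.adjoin K ({α} : Set L) = ⊤} := by
  classical
  haveI : FiniteDimensional K L := FiniteDimensional.of_finrank_pos (hdim ▸ by omega)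
  haveI : Finite L := Module.finite_of_finite K
  haveI : Fintype L := Fintype.ofFinite L
  have hq2 : 2 ≤ q := hq ▸ Fintype.one_lt_card
  have hcardL : Fintype.card L = q ^ d := by
    rw [Module.card_eq_pow_finrank (K := K), hq, hdim]
  set m := d / 2 with hm
  -- the finsets
  set G : Finset L := univ.filter (fun α => IntermediateField.adjoin K ({α} : Set L) = ⊤) with hG
  set N : Finset L := univ.filter (fun α => ¬ IntermediateField.adjoin K ({α} : Set L) = ⊤) with hN
  have hGN : G.card + N.card = q ^ d := by
    rw [hG, hN, Finset.card_filter_add_card_filter_not, Finset.card_univ, hcardL]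
  have hcard_eq : Nat.card {α : L // IntermediateField.adjoin K ({α} : Set L) = ⊤} = G.card := by
    rw [Nat.card_eq_fintype_card, Fintype.card_subtype]
  -- each non-generator satisfies α ^ q ^ e = α for some 1 ≤ e ≤ m
  have key : ∀ α ∈ N, ∃ e ∈ Finset.Icc 1 m, α ^ q ^ e = α := by
    intro α hα
    rw [hN, Finset.mem_filter] at hα
    set F := IntermediateField.adjoin K ({α} : Set L) with hF
    set e := Module.finrank K F with he
    have hmul : e * Module.finrank F L = d := by
      rw [he, ← hdim]; exact Module.finrank_mul_finrank K F L
    have hepos : 0 < e := Module.finrank_pos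
    have hene : e ≠ d := by
      intro hed
      apply hα.2
      have : Module.finrank K F = Module.finrank K (⊤ : IntermediateField K L) := by
        rw [← he, hed, IntermediateField.finrank_top', hdim]
      exact IntermediateField.eq_of_le_of_finrank_eq le_top this
    have hk2 : 2 ≤ Module.finrank F L := by
      rcases Nat.lt_or_ge (Module.finrank F L) 2 with h | h
      · interval_cases h' : (Module.finrank F L) <;> omega
      · exact h
    have hem : e ∈ Finset.Icc 1 m := by
      rw [Finset.mem_Icc]
      constructor
      · omega
      · rw [hm, Nat.le_div_iff_mul_le (by norm_num)]
        calc e * 2 ≤ e * Module.finrank F L := Nat.mul_le_mul_left e hk2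
        _ = d := hmul
    refine ⟨e, hem, ?_⟩
    have hαF : α ∈ F := IntermediateField.mem_adjoin_simple_self K α
    haveI : Fintype F := Fintype.ofFinite F
    have hcardF : Fintype.card F = q ^ e := by
      rw [Module.card_eq_pow_finrank (K := K), hq, he]
    have := FiniteField.pow_card (⟨α, hαF⟩ : F)
    rw [hcardF] at this
    have := congrArg (Subtype.val) this
    simpa using this
  -- N is contained in the union of the root sets
  have hNsub : N ⊆ (Finset.Icc 1 m).biUnion
      (fun e => univ.filter (fun α : L => α ^ q ^ e = α)) := by
    intro α hα
    rw [Finset.mem_biUnion]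
    obtain ⟨e, he, h⟩ := key α hα
    exact ⟨e, he, Finset.mem_filter.2 ⟨Finset.mem_univ α, h⟩⟩
  -- each root set has at most q ^ e elements
  have hroot : ∀ e ∈ Finset.Icc 1 m,
      (univ.filter (fun α : L => α ^ q ^ e = α)).card ≤ q ^ e := by
    intro e he
    set p : Polynomial L := X ^ (q ^ e) - X with hp
    have hqe : 2 ≤ q ^ e := le_trans hq2 (Nat.le_self_pow (by rw [Finset.mem_Icc] at he; omega) q)
    have hp0 : p ≠ 0 := by
      intro h
      have : p.coeff (q ^ e) = 1 := by
        rw [hp, coeff_sub, coeff_X_pow, coeff_X]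
        simp [(ne_of_lt (lt_of_lt_of_le one_lt_two hqe) : (1:ℕ) ≠ q ^ e)]
      rw [h] at this
      simp at this
    have hsub : univ.filter (fun α : L => α ^ q ^ e = α) ⊆ p.roots.toFinset := by
      intro α hα
      rw [Finset.mem_filter] at hα
      rw [Multiset.mem_toFinset, mem_roots hp0]
      simp [hp, IsRoot, sub_eq_zero, hα.2]
    calc (univ.filter (fun α : L => α ^ q ^ e = α)).card
        ≤ p.roots.toFinset.card := Finset.card_le_card hsub
      _ ≤ Multiset.card p.roots := Multiset.toFinset_card_le _
      _ ≤ p.natDegree := p.card_roots'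
      _ ≤ q ^ e := by
          rw [hp]
          refine le_trans (natDegree_sub_le _ _) ?_
          rw [natDegree_X_pow, natDegree_X]
          exact max_le (le_refl _) (le_trans one_le_two hqe)
  have hNle : N.card ≤ ∑ e ∈ Finset.Icc 1 m, q ^ e :=
    le_trans (Finset.card_le_card hNsub)
      (le_trans (Finset.card_biUnion_le) (Finset.sum_le_sum hroot))
  -- real arithmetic
  have hq1R : (1 : ℝ) < (q : ℝ) := by exact_mod_cast hq2.trans_lt' one_lt_two
  have hqne : (q : ℝ) ≠ 1 := ne_of_gt hq1R
  have hsum : (∑ e ∈ Finset.Icc 1 m, (q : ℝ) ^ e)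
      = (q : ℝ) / ((q : ℝ) - 1) * ((q : ℝ) ^ m - 1) := by
    have : Finset.Icc 1 m = Finset.Ico 1 (m + 1) := by rw [Finset.Ico_add_one_right_eq_Icc]
    rw [this, Finset.sum_Ico_eq_sum_range]
    simp only [Nat.add_sub_cancel, pow_add, pow_one]
    rw [← Finset.mul_sum, geom_sum_eq hqne]
    field_simp
  have hpowm : (q : ℝ) ^ m ≤ (q : ℝ) ^ ((d : ℝ) / 2) := by
    have hmle : (m : ℝ) ≤ (d : ℝ) / 2 := by
      have h2m : m * 2 ≤ d := by omega
      rw [le_div_iff₀ (by norm_num : (0:ℝ) < 2)]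
      exact_mod_cast h2m
    rw [← Real.rpow_natCast (q : ℝ) m]
    exact Real.rpow_le_rpow_of_exponent_le (le_of_lt hq1R) hmle
  have hNleR : (N.card : ℝ) ≤ (q : ℝ) / ((q : ℝ) - 1) * ((q : ℝ) ^ ((d : ℝ) / 2) - 1) := by
    calc (N.card : ℝ) ≤ ∑ e ∈ Finset.Icc 1 m, (q : ℝ) ^ e := by exact_mod_cast hNle
      _ = (q : ℝ) / ((q : ℝ) - 1) * ((q : ℝ) ^ m - 1) := hsum
      _ ≤ (q : ℝ) / ((q : ℝ) - 1) * ((q : ℝ) ^ ((d : ℝ) / 2) - 1) := by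
          apply mul_le_mul_of_nonneg_left (by linarith)
          apply div_nonneg (by positivity) (by linarith)
  have hGR : (G.card : ℝ) = (q : ℝ) ^ d - N.card := by
    have := congrArg (Nat.cast (R := ℝ)) hGN
    push_cast at this
    linarith
  rw [hcard_eq]
  rw [hGR]
  linarith
end

section
/- Let K be a finite field with q elements and let d ≥ 1 be an integer. Then the number of monic irreducible polynomials of degree d in K[x] is at least q^d/(2d); equivalently, the density of irreducible polynomials among the q^d monic polynomials of degree d in K[x] is at least 1/(2d). -/
/-!
Let `L` be the extension of `K` of degree `d`, so `|L| = q^d`. An element of `L` whose minimal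
polynomial has degree `d` is a root of one of the `N` monic irreducible polynomials of degree `d`,
so there are at most `d N` of them. Any other element has minimal polynomial of degree `e`, a proper
divisor of `d`, hence `e ≤ d / 2`, and it is a root of `X^(q^e) - X`. Therefore
`q^d ≤ d N + ∑_{e ≤ d/2} q^e ≤ d N + q^d / 2`.
-/

open Polynomial Finset

theorem Nat.le_div_two_of_dvd_of_ne {e d : ℕ} (hd : d ≠ 0) (hdvd : e ∣ d) (hne : e ≠ d) :
    e ≤ d / 2 := by
  obtain ⟨c, rfl⟩ := hdvd
  have hc : 2 ≤ c := by
    rcases c with _ | _ | c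
    · simp at hd
    · simp at hne
    · omega
  rw [Nat.le_div_iff_mul_le two_pos]
  exact Nat.mul_le_mul_left e hc

theorem Nat.sum_Icc_one_pow_add_two_le {q : ℕ} (hq : 2 ≤ q) (m : ℕ) :
    ∑ e ∈ Icc 1 m, q ^ e + 2 ≤ 2 * q ^ m := by
  induction m with
  | zero => simp
  | succ m ih =>
    rw [sum_Icc_succ_top (by omega), pow_succ]
    have := Nat.mul_le_mul_left (q ^ m) hq
    omega

theorem Nat.two_mul_sum_Icc_one_pow_half_le {q : ℕ} (hq : 2 ≤ q) (d : ℕ) :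
    2 * ∑ e ∈ Icc 1 (d / 2), q ^ e ≤ q ^ d := by
  have hsum := sum_Icc_one_pow_add_two_le hq (d / 2)
  have hsq : q ^ (d / 2) * q ^ (d / 2) ≤ q ^ d := by
    rw [← pow_add]
    exact Nat.pow_le_pow_right (by omega) (by omega)
  nlinarith [sq_nonneg ((q : ℤ) ^ (d / 2) - 2)]

theorem Polynomial.finite_setOf_monic_natDegree_eq_irreducible (K : Type*) [Field K] [Finite K]
    (n : ℕ) : {f : K[X] | f.Monic ∧ f.natDegree = n ∧ Irreducible f}.Finite := by
  have : Finite {f : K[X] // f.Monic ∧ f.natDegree = n} :=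
    .of_equiv _ ((monicEquivDegreeLT n).trans (degreeLTEquiv K n).toEquiv).symm
  exact (Set.finite_coe_iff (s := {f : K[X] | f.Monic ∧ f.natDegree = n}).mp this).subset
    fun f hf ↦ ⟨hf.1, hf.2.1⟩

theorem Polynomial.card_filter_aeval_eq_zero_le {K L : Type*} [Field K] [CommRing L] [IsDomain L]
    [Algebra K L] [Fintype L] [DecidableEq L] {f : K[X]} (hf : f ≠ 0) :
    #{x : L | aeval x f = 0} ≤ f.natDegree := by
  have : ({x : L | aeval x f = 0} : Finset L) = f.rootSet L := by
    ext x; simp [mem_rootSet, hf]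
  rw [← Set.ncard_coe_finset, this]
  exact ncard_rootSet_le f L

section

variable (K : Type*) {L : Type*} [Field K] [Finite K] [Field L] [Algebra K L]

theorem pow_card_pow_natDegree_minpoly [Finite L] (x : L) :
    x ^ Nat.card K ^ (minpoly K x).natDegree = x := by
  have hx := minpoly.irreducible (IsIntegral.of_finite K x)
  have := minpoly.dvd_iff.mp (hx.natDegree_dvd_iff_dvd_X_pow_card_pow_sub_X.mp dvd_rfl)
  simpa [sub_eq_zero] using this

variable [Fintype L]

theorem card_filter_natDegree_minpoly_eq_le (n : ℕ) :
    #{x : L | (minpoly K x).natDegree = n} ≤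
      n * Nat.card {f : K[X] // f.Monic ∧ f.natDegree = n ∧ Irreducible f} := by
  classical
  have hS := finite_setOf_monic_natDegree_eq_irreducible K n
  refine (card_le_mul_card_image_of_maps_to (f := minpoly K) (t := hS.toFinset) (fun x hx ↦ ?_) n
    fun f hf ↦ ?_).trans_eq (congrArg _ (Nat.card_eq_card_finite_toFinset hS).symm)
  · have hint := IsIntegral.of_finite K x
    simp only [mem_filter, mem_univ, true_and] at hx
    simpa using ⟨minpoly.monic hint, hx, minpoly.irreducible hint⟩
  · simp only [Set.Finite.mem_toFinset, Set.mem_ofPred_eq] at hf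
    calc #{x ∈ {x : L | (minpoly K x).natDegree = n} | minpoly K x = f}
        ≤ #{x : L | aeval x f = 0} := by
          refine card_le_card fun x hx ↦ ?_
          simp only [mem_filter, mem_univ, true_and] at hx ⊢
          exact hx.2 ▸ minpoly.aeval K x
      _ ≤ n := hf.2.1 ▸ card_filter_aeval_eq_zero_le hf.2.2.ne_zero

theorem card_filter_natDegree_minpoly_ne_le {d : ℕ} (hd : Module.finrank K L = d) :
    #{x : L | (minpoly K x).natDegree ≠ d} ≤ ∑ e ∈ Icc 1 (d / 2), Nat.card K ^ e := by
  classical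
  calc #{x : L | (minpoly K x).natDegree ≠ d}
      ≤ #((Icc 1 (d / 2)).biUnion fun e ↦
          {x : L | aeval x (X ^ Nat.card K ^ e - X : K[X]) = 0}) := by
        refine card_le_card fun x hx ↦ ?_
        have hint := IsIntegral.of_finite K x
        have hd0 : d ≠ 0 := hd ▸ Module.finrank_pos.ne'
        simp only [mem_filter, mem_univ, true_and] at hx
        simp only [mem_biUnion, mem_Icc, mem_filter, mem_univ, true_and]
        refine ⟨_, ⟨minpoly.natDegree_pos hint,
          Nat.le_div_two_of_dvd_of_ne hd0 (hd ▸ minpoly.degree_dvd hint) hx⟩, ?_⟩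
        simp [pow_card_pow_natDegree_minpoly]
    _ ≤ ∑ e ∈ Icc 1 (d / 2), #{x : L | aeval x (X ^ Nat.card K ^ e - X : K[X]) = 0} :=
        card_biUnion_le
    _ ≤ ∑ e ∈ Icc 1 (d / 2), Nat.card K ^ e := by
        refine sum_le_sum fun e he ↦ ?_
        have hq : 1 < Nat.card K := Finite.one_lt_card
        have he0 : e ≠ 0 := by simp at he; omega
        calc _ ≤ _ :=
              card_filter_aeval_eq_zero_le (FiniteField.X_pow_card_pow_sub_X_ne_zero K he0 hq)
          _ = _ := FiniteField.X_pow_card_pow_sub_X_natDegree_eq K he0 hq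

end

theorem pow_card_le_two_mul_mul_card_irreducible (K : Type*) [Field K] [Finite K] {d : ℕ}
    (hd : d ≠ 0) :
    Nat.card K ^ d ≤
      2 * (d * Nat.card {f : K[X] // f.Monic ∧ f.natDegree = d ∧ Irreducible f}) := by
  obtain ⟨p, _⟩ := CharP.exists K
  have : Fact p.Prime := ⟨CharP.char_is_prime K p⟩
  have : NeZero d := ⟨hd⟩
  let L := FiniteField.Extension K p d
  have := Fintype.ofFinite L
  have hcard : #{x : L | (minpoly K x).natDegree = d} + #{x : L | (minpoly K x).natDegree ≠ d}
      = Nat.card K ^ d := by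
    rw [card_filter_add_card_filter_not, card_univ, ← Nat.card_eq_fintype_card,
      FiniteField.natCard_extension]
  have hdeg := card_filter_natDegree_minpoly_eq_le K (L := L) d
  have hsmall :=
    card_filter_natDegree_minpoly_ne_le K (L := L) (FiniteField.finrank_extension K p d)
  have hgeom := Nat.two_mul_sum_Icc_one_pow_half_le (Finite.one_lt_card (α := K)) d
  omega

/-- Over a finite field `K` with `q` elements, for `d ≥ 1`, the number of
monic irreducible polynomials of degree `d` in `K[x]` is at least `q^d/(2d)`. -/
theorem count_irreducible_ge_half
    (K : Type*) [Field K] [Fintype K] (q : ℕ) (hq : Fintype.card K = q)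
    (d : ℕ) (hd : 1 ≤ d) :
    (q : ℝ) ^ d / (2 * d)
      ≤ Nat.card {f : Polynomial K // f.Monic ∧ f.natDegree = d ∧ Irreducible f} := by
  rw [div_le_iff₀ (by positivity), ← hq, ← Nat.card_eq_fintype_card]
  exact_mod_cast (pow_card_le_two_mul_mul_card_irreducible K (by omega)).trans_eq (by ring)
end

section
/- Let K be a finite field with q elements, let d ≥ 1 be an integer, and let L be the field extension of K of degree d. Then the number of elements α ∈ L such that K(α) = L is at least q^d/2; equivalently, the density of generators of the K-algebra L among all elements of L is at least 1/2. -/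
open Polynomial Module IntermediateField

lemma geom_aux {q : ℕ} (hq : 2 ≤ q) : ∀ m : ℕ, ∑ e ∈ Finset.Icc 1 m, q ^ e ≤ 2 * q ^ m
  | 0 => by simp
  | (m+1) => by
      rw [Finset.sum_Icc_succ_top (by omega)]
      have := geom_aux hq m
      have h2 : 2 * q ^ m ≤ q ^ (m+1) := by
        rw [pow_succ]
        nlinarith [Nat.one_le_pow m q (by omega : 0 < q)]
      omega

lemma sum_bound {q d : ℕ} (hq : 2 ≤ q) (hd : 1 ≤ d) :
    2 * ∑ e ∈ Finset.Icc 1 (d / 2), q ^ e ≤ q ^ d := by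
  rcases Nat.lt_or_ge d 3 with h3 | h3
  · interval_cases d
    · simp
    · norm_num
      nlinarith
  · have hm : d / 2 + 2 ≤ d := by omega
    calc 2 * ∑ e ∈ Finset.Icc 1 (d / 2), q ^ e ≤ 2 * (2 * q ^ (d / 2)) :=
          Nat.mul_le_mul_left _ (geom_aux hq _)
      _ = 4 * q ^ (d / 2) := by ring
      _ ≤ q ^ 2 * q ^ (d / 2) := Nat.mul_le_mul_right _ (by nlinarith)
      _ = q ^ (2 + d / 2) := (pow_add q 2 (d/2)).symm
      _ ≤ q ^ d := Nat.pow_le_pow_right (by omega) (by omega)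

/-- Let `K` be a finite field with `q` elements and `L` the extension of
`K` of degree `d ≥ 1`. The number of `α ∈ L` with `K(α) = L` is at least `q^d/2`. -/
theorem count_generators_ge_half
    (K L : Type*) [Field K] [Fintype K] [Field L] [Algebra K L]
    (q d : ℕ) (hq : Fintype.card K = q) (hd : 1 ≤ d)
    (hdim : Module.finrank K L = d) :
    (q : ℝ) ^ d / 2
      ≤ Nat.card {α : L // IntermediateField.adjoin K ({α} : Set L) = ⊤} := by
  classical
  have hq2 : 2 ≤ q := hq ▸ Fintype.one_lt_card
  have hfd : FiniteDimensional K L := FiniteDimensional.of_finrank_pos (by omega)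
  have hfin : Finite L := Module.finite_of_finite K
  cases nonempty_fintype L
  have hcardL : Fintype.card L = q ^ d := by
    rw [← hq, ← hdim]; exact card_eq_pow_finrank (K := K)
  set m := d / 2 with hm
  set P : L → Prop := fun α => IntermediateField.adjoin K ({α} : Set L) = ⊤ with hP
  have key : ∀ α : L, ¬ P α → ∃ e ∈ Finset.Icc 1 m, α ^ q ^ e = α := by
    intro α hα
    set F := IntermediateField.adjoin K ({α} : Set L) with hF
    set e := Module.finrank K F with he
    have hdvd : e ∣ d := by
      rw [← hdim, ← Module.finrank_mul_finrank K F L]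
      exact Dvd.intro _ rfl
    have hlt : e ≠ d := by
      intro hed
      apply hα
      refine IntermediateField.eq_of_le_of_finrank_le le_top ?_
      rw [IntermediateField.finrank_top', hdim, ← hed]
    have h1 : 1 ≤ e := Module.finrank_pos
    have hem : e ≤ m := by
      obtain ⟨k, hk⟩ := hdvd
      have hk0 : k ≠ 0 := by rintro rfl; omega
      have hk1 : k ≠ 1 := by rintro rfl; rw [mul_one] at hk; exact hlt hk.symm
      have h2k : 2 ≤ k := by omega
      have : e * 2 ≤ e * k := Nat.mul_le_mul_left e h2k
      rw [hm]
      exact Nat.le_div_iff_mul_le two_pos |>.mpr (by omega)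
    refine ⟨e, Finset.mem_Icc.mpr ⟨h1, hem⟩, ?_⟩
    have hmem : α ∈ F := IntermediateField.mem_adjoin_simple_self K α
    have hcardF : Fintype.card F = q ^ e := by
      rw [← hq, he]; exact card_eq_pow_finrank (K := K)
    have : (⟨α, hmem⟩ : F) ^ q ^ e = ⟨α, hmem⟩ := by
      rw [← hcardF]; exact FiniteField.pow_card _
    have := congrArg (Subtype.val) this
    simpa using this
  -- counting the bad set
  have hfilter : ∀ e ∈ Finset.Icc 1 m,
      (Finset.univ.filter (fun α : L => α ^ q ^ e = α)).card ≤ q ^ e := by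
    intro e he
    obtain ⟨h1e, -⟩ := Finset.mem_Icc.mp he
    have hqe : 2 ≤ q ^ e := le_trans hq2 (Nat.le_self_pow (by omega) q)
    have hmonic : (X ^ (q ^ e) - X : L[X]).Monic :=
      monic_X_pow_sub (by simpa using (by exact_mod_cast Nat.lt_of_lt_of_le one_lt_two hqe : (1 : WithBot ℕ) < (q ^ e : ℕ)))
    have hne : (X ^ (q ^ e) - X : L[X]) ≠ 0 := hmonic.ne_zero
    calc (Finset.univ.filter (fun α : L => α ^ q ^ e = α)).card
        ≤ (X ^ (q ^ e) - X : L[X]).roots.toFinset.card := by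
          apply Finset.card_le_card
          intro α hα
          rw [Finset.mem_filter] at hα
          rw [Multiset.mem_toFinset, mem_roots hne]
          simp [hα.2]
      _ ≤ Multiset.card (X ^ (q ^ e) - X : L[X]).roots := Multiset.toFinset_card_le _
      _ ≤ (X ^ (q ^ e) - X : L[X]).natDegree := Polynomial.card_roots' _
      _ ≤ q ^ e := le_trans (natDegree_sub_le _ _) (by simp; omega)
  set B := (Finset.Icc 1 m).biUnion
      (fun e => Finset.univ.filter (fun α : L => α ^ q ^ e = α)) with hB
  have hbad : (Finset.univ.filter (fun α => ¬ P α)).card ≤ ∑ e ∈ Finset.Icc 1 m, q ^ e := by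
    calc (Finset.univ.filter (fun α => ¬ P α)).card ≤ B.card := by
          apply Finset.card_le_card
          intro α hα
          rw [Finset.mem_filter] at hα
          obtain ⟨e, he, hpow⟩ := key α hα.2
          exact Finset.mem_biUnion.mpr ⟨e, he, Finset.mem_filter.mpr ⟨Finset.mem_univ _, hpow⟩⟩
      _ ≤ ∑ e ∈ Finset.Icc 1 m, (Finset.univ.filter (fun α : L => α ^ q ^ e = α)).card :=
          Finset.card_biUnion_le
      _ ≤ ∑ e ∈ Finset.Icc 1 m, q ^ e := Finset.sum_le_sum hfilter
  have hsplit : (Finset.univ.filter P).card + (Finset.univ.filter (fun α => ¬ P α)).card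
      = q ^ d := by rw [Finset.card_filter_add_card_filter_not, ← hcardL]; simp
  have hN : Nat.card {α : L // IntermediateField.adjoin K ({α} : Set L) = ⊤}
      = (Finset.univ.filter P).card := by
    rw [Nat.card_eq_fintype_card, Fintype.card_subtype]
  have hsum := sum_bound hq2 hd
  have hfinal : q ^ d ≤ 2 * (Finset.univ.filter P).card := by
    simp only [hm] at hbad
    omega
  rw [hN, div_le_iff₀ (by norm_num : (0:ℝ) < 2)]
  exact_mod_cast (by omega : q ^ d ≤ (Finset.univ.filter P).card * 2)
end

section
/- Let K be a finite field with q elements and let Ω be an algebraic closure of K. Let α₁, α₂ ∈ Ω be such that [K(α₁):K] = d₁ and [K(α₂):K] = d₂ with gcd(d₁, d₂) = 1. Then α₁ + α₂ generates the compositum of K(α₁) and K(α₂) over K; that is, [K(α₁ + α₂):K] = d₁·d₂, so K(α₁ + α₂) is the subfield of Ω with q^{d₁ d₂} elements. -/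
/-!
Let `σ = x ↦ x ^ q ^ d` with `d = [K(α₁ + α₂) : K]`, so that `σ` fixes `α₁ + α₂`. Then
`c := σ α₁ - α₁ = α₂ - σ α₂` lies in `K(α₁) ∩ K(α₂)`, which is `K` since the degrees are coprime.
Hence `σ ^ m α₁ = α₁ + m c`, and `σ ^ d₁` fixes `α₁` because `α₁ ^ q ^ d₁ = α₁`; so `d₁ c = 0`,
likewise `d₂ c = 0`, and `c = 0`. Thus `σ` fixes `α₁` and `α₂`, i.e. `d₁ ∣ d` and `d₂ ∣ d`,
so `d₁ d₂ ≤ d ≤ [K(α₁)K(α₂) : K] = d₁ d₂`.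
-/

open IntermediateField Module FiniteField

theorem eq_zero_of_nsmul_eq_zero_of_coprime {G : Type*} [AddMonoid G] {a : G} {m n : ℕ}
    (hmn : m.Coprime n) (hm : m • a = 0) (hn : n • a = 0) : a = 0 := by
  have h := Nat.dvd_gcd (addOrderOf_dvd_of_nsmul_eq_zero hm) (addOrderOf_dvd_of_nsmul_eq_zero hn)
  rwa [hmn.gcd_eq_one, Nat.dvd_one, AddMonoid.addOrderOf_eq_one_iff] at h

theorem AlgHom.pow_apply_eq_add_nsmul {R A : Type*} [CommSemiring R] [Semiring A] [Algebra R A]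
    (σ : A →ₐ[R] A) {x : A} {c : R} (h : σ x = x + algebraMap R A c) (m : ℕ) :
    (σ ^ m) x = x + algebraMap R A (m • c) := by
  induction m with
  | zero => simp
  | succ m ih =>
    rw [pow_succ, AlgHom.mul_apply, h, map_add, AlgHom.commutes, ih, succ_nsmul, map_add, add_assoc]

section FiniteBase

variable {K : Type*} [Field K] [Fintype K]

theorem FiniteField.frobeniusAlgHom_pow_apply (R : Type*) [CommRing R] [Algebra K R] (n : ℕ)
    (x : R) : (frobeniusAlgHom K R ^ n) x = x ^ Fintype.card K ^ n := by
  rw [AlgHom.coe_pow, coe_frobeniusAlgHom, pow_iterate]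

variable {Ω : Type*} [Field Ω] [Algebra K Ω]

theorem IntermediateField.finrank_adjoin_simple_dvd_iff {β : Ω} (hβ : IsIntegral K β) {n : ℕ} :
    finrank K K⟮β⟯ ∣ n ↔ β ^ Fintype.card K ^ n = β := by
  rw [adjoin.finrank hβ, (minpoly.irreducible hβ).natDegree_dvd_iff_dvd_X_pow_card_pow_sub_X,
    minpoly.dvd_iff, Nat.card_eq_fintype_card]
  simp [sub_eq_zero]

theorem finrank_adjoin_simple_nsmul_eq_zero {α : Ω} (hα : IsIntegral K α) {n : ℕ} {c : K}
    (h : (frobeniusAlgHom K Ω ^ n) α = α + algebraMap K Ω c) : finrank K K⟮α⟯ • c = 0 := by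
  have hfix := (frobeniusAlgHom K Ω ^ n).pow_apply_eq_add_nsmul h (finrank K K⟮α⟯)
  rw [← pow_mul, frobeniusAlgHom_pow_apply,
    (finrank_adjoin_simple_dvd_iff hα).1 (dvd_mul_left _ _)] at hfix
  rwa [left_eq_add, FaithfulSMul.algebraMap_eq_zero_iff] at hfix

theorem pow_card_pow_eq_self_of_add {α₁ α₂ : Ω} (h₁ : IsIntegral K α₁) (h₂ : IsIntegral K α₂)
    (hcop : (finrank K K⟮α₁⟯).Coprime (finrank K K⟮α₂⟯)) {n : ℕ}
    (hn : (α₁ + α₂) ^ Fintype.card K ^ n = α₁ + α₂) : α₁ ^ Fintype.card K ^ n = α₁ := by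
  set σ := frobeniusAlgHom K Ω ^ n
  have hσ : ∀ x, σ x = x ^ Fintype.card K ^ n := frobeniusAlgHom_pow_apply Ω n
  have hc₂ : σ α₁ - α₁ = -(σ α₂ - α₂) := by
    rw [← hσ, map_add] at hn
    linear_combination hn
  have hc : σ α₁ - α₁ ∈ K⟮α₁⟯ ⊓ K⟮α₂⟯ := by
    refine ⟨?_, ?_⟩
    · rw [hσ]
      exact sub_mem (pow_mem (mem_adjoin_simple_self K α₁) _) (mem_adjoin_simple_self K α₁)
    · rw [SetLike.mem_coe, hc₂, hσ]
      exact neg_mem <|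
        sub_mem (pow_mem (mem_adjoin_simple_self K α₂) _) (mem_adjoin_simple_self K α₂)
  rw [(LinearDisjoint.of_finrank_coprime hcop).inf_eq_bot, mem_bot] at hc
  obtain ⟨c, hc⟩ := hc
  have hd₁ : finrank K K⟮α₁⟯ • c = 0 :=
    finrank_adjoin_simple_nsmul_eq_zero h₁ (n := n) (by rw [hc]; ring)
  have hd₂ : finrank K K⟮α₂⟯ • c = 0 := by
    rw [← neg_eq_zero, ← smul_neg]
    exact finrank_adjoin_simple_nsmul_eq_zero h₂ (n := n) (by rw [map_neg, hc, hc₂]; ring)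
  rw [← hσ, ← sub_eq_zero, ← hc, eq_zero_of_nsmul_eq_zero_of_coprime hcop hd₁ hd₂, map_zero]

theorem finrank_adjoin_simple_dvd_finrank_adjoin_add {α₁ α₂ : Ω} (h₁ : IsIntegral K α₁)
    (h₂ : IsIntegral K α₂) (hcop : (finrank K K⟮α₁⟯).Coprime (finrank K K⟮α₂⟯)) :
    finrank K K⟮α₁⟯ ∣ finrank K K⟮α₁ + α₂⟯ :=
  (finrank_adjoin_simple_dvd_iff h₁).2 <| pow_card_pow_eq_self_of_add h₁ h₂ hcop <|
    (finrank_adjoin_simple_dvd_iff (h₁.add h₂)).1 dvd_rfl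

end FiniteBase

theorem sum_generates_compositum_general
    (K Ω : Type*) [Field K] [Fintype K] [Field Ω] [Algebra K Ω] [IsAlgClosure K Ω]
    (α₁ α₂ : Ω) (d₁ d₂ : ℕ)
    (h₁ : Module.finrank K (IntermediateField.adjoin K ({α₁} : Set Ω)) = d₁)
    (h₂ : Module.finrank K (IntermediateField.adjoin K ({α₂} : Set Ω)) = d₂)
    (hcop : Nat.Coprime d₁ d₂) :
    IntermediateField.adjoin K ({α₁ + α₂} : Set Ω)
        = IntermediateField.adjoin K ({α₁} : Set Ω) ⊔ IntermediateField.adjoin K ({α₂} : Set Ω)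
      ∧ Module.finrank K (IntermediateField.adjoin K ({α₁ + α₂} : Set Ω)) = d₁ * d₂ := by
  subst h₁ h₂
  have hint (x : Ω) : IsIntegral K x := Algebra.IsIntegral.isIntegral x
  have hle : K⟮α₁ + α₂⟯ ≤ K⟮α₁⟯ ⊔ K⟮α₂⟯ := adjoin_simple_le_iff.2 <|
    add_mem (le_sup_left (a := K⟮α₁⟯) (mem_adjoin_simple_self K α₁))
      (le_sup_right (b := K⟮α₂⟯) (mem_adjoin_simple_self K α₂))
  have hsup : finrank K ↥(K⟮α₁⟯ ⊔ K⟮α₂⟯) = finrank K K⟮α₁⟯ * finrank K K⟮α₂⟯ :=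
    (LinearDisjoint.of_finrank_coprime hcop).finrank_sup
  have hdvd : finrank K K⟮α₁⟯ * finrank K K⟮α₂⟯ ∣ finrank K K⟮α₁ + α₂⟯ :=
    hcop.mul_dvd_of_dvd_of_dvd
      (finrank_adjoin_simple_dvd_finrank_adjoin_add (hint α₁) (hint α₂) hcop)
      (add_comm α₁ α₂ ▸ finrank_adjoin_simple_dvd_finrank_adjoin_add (hint α₂) (hint α₁) hcop.symm)
  have : FiniteDimensional K K⟮α₁⟯ := adjoin.finiteDimensional (hint α₁)
  have : FiniteDimensional K K⟮α₂⟯ := adjoin.finiteDimensional (hint α₂)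
  have : FiniteDimensional K K⟮α₁ + α₂⟯ := adjoin.finiteDimensional (hint _)
  have hge : finrank K ↥(K⟮α₁⟯ ⊔ K⟮α₂⟯) ≤ finrank K K⟮α₁ + α₂⟯ :=
    hsup ▸ Nat.le_of_dvd finrank_pos hdvd
  exact ⟨eq_of_le_of_finrank_le hle hge,
    ((finrank_le_of_le_right hle).antisymm hge).trans hsup⟩

/-- Let `K` be a finite field with `q` elements, `Ω` an algebraic closure
of `K`, and `α₁, α₂ ∈ Ω` of degrees `d₁, d₂` over `K` with `gcd(d₁,d₂) = 1`. Then
`α₁ + α₂` generates the compositum `K(α₁)·K(α₂)`, i.e. `[K(α₁+α₂):K] = d₁·d₂`. -/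
theorem sum_generates_compositum
    (K Ω : Type*) [Field K] [Fintype K] [Field Ω] [Algebra K Ω] [IsAlgClosure K Ω]
    (q : ℕ) (hq : Fintype.card K = q)
    (α₁ α₂ : Ω) (d₁ d₂ : ℕ)
    (h₁ : Module.finrank K (IntermediateField.adjoin K ({α₁} : Set Ω)) = d₁)
    (h₂ : Module.finrank K (IntermediateField.adjoin K ({α₂} : Set Ω)) = d₂)
    (hcop : Nat.Coprime d₁ d₂) :
    IntermediateField.adjoin K ({α₁ + α₂} : Set Ω)
        = IntermediateField.adjoin K ({α₁} : Set Ω) ⊔ IntermediateField.adjoin K ({α₂} : Set Ω)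
      ∧ Module.finrank K (IntermediateField.adjoin K ({α₁ + α₂} : Set Ω)) = d₁ * d₂ :=
  sum_generates_compositum_general K Ω α₁ α₂ d₁ d₂ h₁ h₂ hcop
end

section
/- Let K be a finite field with q elements and let Ω be an algebraic closure of K. Let α₁, α₂ ∈ Ω be nonzero elements such that [K(α₁):K] = d₁ and [K(α₂):K] = d₂ with gcd(d₁, d₂) = 1. Then α₁·α₂ generates the compositum of K(α₁) and K(α₂) over K; that is, [K(α₁·α₂):K] = d₁·d₂, so K(α₁·α₂) is the subfield of Ω with q^{d₁ d₂} elements. -/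
open IntermediateField Module Polynomial

section Aux

variable {K Ω : Type*} [Field K] [Fintype K] [Field Ω] [Algebra K Ω]

private lemma aux_pow_fix_of_dvd {x : Ω} {Q a b : ℕ} (hab : a ∣ b) (hx : x ^ Q ^ a = x) :
    x ^ Q ^ b = x := by
  obtain ⟨k, rfl⟩ := hab
  induction k with
  | zero => simp
  | succ k ih => rw [Nat.mul_succ, pow_add, pow_mul, ih, hx]

private lemma aux_pow_q_pow_finrank_eq {L : IntermediateField K Ω} [FiniteDimensional K L]
    {x : Ω} (hx : x ∈ L) :
    x ^ (Fintype.card K) ^ (Module.finrank K L) = x := by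
  haveI : Finite L := Module.finite_of_finite K
  haveI : Fintype L := Fintype.ofFinite L
  have hcard : Fintype.card L = (Fintype.card K) ^ (Module.finrank K L) :=
    card_eq_pow_finrank
  have h := FiniteField.pow_card (⟨x, hx⟩ : L)
  rw [hcard] at h
  have := congrArg Subtype.val h
  simpa using this

private lemma aux_finrank_dvd_of_pow_fix {L : IntermediateField K Ω} [FiniteDimensional K L]
    {n : ℕ} (h : ∀ x ∈ L, x ^ (Fintype.card K) ^ n = x) :
    Module.finrank K L ∣ n := by
  set q := Fintype.card K with hq
  have hq1 : 1 < q := Fintype.one_lt_card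
  set d := Module.finrank K L with hd
  have hd0 : 0 < d := Module.finrank_pos
  have key : ∀ x ∈ L, x ^ q ^ (n % d) = x := by
    intro x hx
    have hfix : x ^ q ^ d = x := aux_pow_q_pow_finrank_eq hx
    have hmod := h x hx
    rw [← Nat.div_add_mod n d, pow_add, pow_mul,
      aux_pow_fix_of_dvd (Dvd.intro _ rfl) hfix] at hmod
    exact hmod
  set r := n % d with hr
  rcases Nat.eq_zero_or_pos r with h0 | hpos
  · exact Nat.dvd_of_mod_eq_zero h0
  exfalso
  classical
  have hrd : r < d := Nat.mod_lt _ hd0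
  haveI : Finite L := Module.finite_of_finite K
  haveI : Fintype L := Fintype.ofFinite L
  have hcard : Fintype.card L = q ^ d := card_eq_pow_finrank
  set f : Polynomial Ω := X ^ q ^ r - X with hf
  have hfne : f ≠ 0 := FiniteField.X_pow_card_pow_sub_X_ne_zero Ω hpos.ne' hq1
  have hdeg : f.natDegree = q ^ r :=
    FiniteField.X_pow_card_pow_sub_X_natDegree_eq Ω hpos.ne' hq1
  have hsub : (L : Set Ω) ⊆ {x | f.IsRoot x} := by
    intro x hx
    simp only [Set.mem_setOf_eq, IsRoot, hf, eval_sub, eval_pow, eval_X]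
    rw [key x hx, sub_self]
  have hfin : {x | f.IsRoot x}.Finite := Polynomial.finite_setOf_isRoot hfne
  have hle : (L : Set Ω).ncard ≤ {x | f.IsRoot x}.ncard :=
    Set.ncard_le_ncard hsub hfin
  have hLcard : (L : Set Ω).ncard = q ^ d := by
    calc (L : Set Ω).ncard = Nat.card (L : Set Ω) := (Nat.card_coe_set_eq _).symm
      _ = Nat.card L := by rw [SetLike.coe_sort_coe]
      _ = Fintype.card L := Nat.card_eq_fintype_card
      _ = q ^ d := hcard
  have hroot_card : {x | f.IsRoot x}.ncard ≤ q ^ r := by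
    have h1 : {x | f.IsRoot x}.ncard ≤ (f.roots.toFinset : Set Ω).ncard := by
      apply Set.ncard_le_ncard ?_ f.roots.toFinset.finite_toSet
      intro x hx
      simp only [Finset.coe_sort_coe, Multiset.mem_toFinset, mem_roots, hfne, ne_eq,
        not_false_iff, true_and, Finset.mem_coe]
      exact hx
    calc {x | f.IsRoot x}.ncard ≤ (f.roots.toFinset : Set Ω).ncard := h1
      _ = f.roots.toFinset.card := Set.ncard_coe_finset _
      _ ≤ f.roots.card := f.roots.toFinset_card_le
      _ ≤ f.natDegree := f.card_roots'
      _ = q ^ r := hdeg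
  have : q ^ d ≤ q ^ r := hLcard ▸ hle.trans hroot_card
  exact absurd (Nat.pow_le_pow_iff_right hq1 |>.mp this) (not_le.mpr hrd)

/-- There is an intermediate field of `Ω / K` consisting exactly of the solutions
of `x ^ q ^ n = x`. -/
private lemma aux_exists_fix (n : ℕ) :
    ∃ N : IntermediateField K Ω, ∀ x : Ω, x ∈ N ↔ x ^ (Fintype.card K) ^ n = x := by
  classical
  set q := Fintype.card K with hq
  obtain ⟨p, hpc⟩ := CharP.exists K
  haveI : CharP K p := hpc
  have hp : p.Prime := CharP.char_is_prime K p
  haveI : Fact p.Prime := ⟨hp⟩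
  obtain ⟨v, _, hv⟩ := FiniteField.card K p
  haveI : CharP Ω p := charP_of_injective_algebraMap (algebraMap K Ω).injective p
  have hqn : q ^ n = p ^ ((v : ℕ) * n) := by rw [hq, hv, ← pow_mul]
  have hneg : ((-1 : Ω)) ^ q ^ n = -1 := by
    have h1 : ((-1 : K)) ^ q ^ n = -1 := FiniteField.pow_card_pow n (-1 : K)
    have := congrArg (algebraMap K Ω) h1
    simpa using this
  let S : Subfield Ω :=
  { carrier := {x : Ω | x ^ q ^ n = x}
    mul_mem' := fun {a b} ha hb => by
      simp only [Set.mem_setOf_eq] at *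
      rw [mul_pow, ha, hb]
    one_mem' := by simp
    add_mem' := fun {a b} ha hb => by
      simp only [Set.mem_setOf_eq] at *
      rw [hqn] at *
      rw [add_pow_char_pow, ha, hb]
    zero_mem' := by
      simp only [Set.mem_setOf_eq]
      exact zero_pow (by positivity)
    neg_mem' := fun {a} ha => by
      simp only [Set.mem_setOf_eq] at *
      rw [neg_eq_neg_one_mul, mul_pow, hneg, ha]
    inv_mem' := fun a ha => by
      simp only [Set.mem_setOf_eq] at *
      rw [inv_pow, ha] }
  refine ⟨S.toIntermediateField fun c => ?_, fun x => Iff.rfl⟩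
  show (algebraMap K Ω c) ^ q ^ n = algebraMap K Ω c
  rw [← map_pow, FiniteField.pow_card_pow]

end Aux

/-- Let `K` be a finite field with `q` elements, `Ω` an algebraic closure
of `K`, and `α₁, α₂ ∈ Ω` nonzero of degrees `d₁, d₂` over `K` with `gcd(d₁,d₂) = 1`. Then
`α₁·α₂` generates the compositum `K(α₁)·K(α₂)`, i.e. `[K(α₁·α₂):K] = d₁·d₂`. -/
theorem mul_generates_compositum
    (K Ω : Type*) [Field K] [Fintype K] [Field Ω] [Algebra K Ω] [IsAlgClosure K Ω]
    (q : ℕ) (hq : Fintype.card K = q)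
    (α₁ α₂ : Ω) (hα₁ : α₁ ≠ 0) (hα₂ : α₂ ≠ 0) (d₁ d₂ : ℕ)
    (h₁ : Module.finrank K (IntermediateField.adjoin K ({α₁} : Set Ω)) = d₁)
    (h₂ : Module.finrank K (IntermediateField.adjoin K ({α₂} : Set Ω)) = d₂)
    (hcop : Nat.Coprime d₁ d₂) :
    IntermediateField.adjoin K ({α₁ * α₂} : Set Ω)
        = IntermediateField.adjoin K ({α₁} : Set Ω) ⊔ IntermediateField.adjoin K ({α₂} : Set Ω)
      ∧ Module.finrank K (IntermediateField.adjoin K ({α₁ * α₂} : Set Ω)) = d₁ * d₂ := by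
  haveI : Algebra.IsAlgebraic K Ω := IsAlgClosure.isAlgebraic
  set E := IntermediateField.adjoin K ({α₁} : Set Ω) with hE
  set F := IntermediateField.adjoin K ({α₂} : Set Ω) with hF
  set M := IntermediateField.adjoin K ({α₁ * α₂} : Set Ω) with hM
  haveI : FiniteDimensional K E :=
    IntermediateField.adjoin.finiteDimensional (Algebra.IsIntegral.isIntegral α₁)
  haveI : FiniteDimensional K F :=
    IntermediateField.adjoin.finiteDimensional (Algebra.IsIntegral.isIntegral α₂)
  haveI : FiniteDimensional K M :=
    IntermediateField.adjoin.finiteDimensional (Algebra.IsIntegral.isIntegral (α₁ * α₂))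
  set m := Module.finrank K M with hm
  -- degree of the compositum
  have hEF : Module.finrank K (E ⊔ F : IntermediateField K Ω) = d₁ * d₂ := by
    have hld : E.LinearDisjoint F :=
      IntermediateField.LinearDisjoint.of_finrank_coprime (by rw [h₁, h₂]; exact hcop)
    rw [hld.finrank_sup, h₁, h₂]
  -- memberships
  have hα₁E : α₁ ∈ E := IntermediateField.mem_adjoin_simple_self K α₁
  have hα₂F : α₂ ∈ F := IntermediateField.mem_adjoin_simple_self K α₂
  have hmulM : α₁ * α₂ ∈ M := IntermediateField.mem_adjoin_simple_self K (α₁ * α₂)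
  -- M ≤ E ⊔ F
  have hMle : M ≤ E ⊔ F := by
    rw [hM]
    apply IntermediateField.adjoin_le_iff.mpr
    intro x hx
    rw [Set.mem_singleton_iff] at hx
    subst hx
    exact mul_mem (le_sup_left (a := E) (b := F) hα₁E) (le_sup_right (a := E) (b := F) hα₂F)
  have hmdvd : m ∣ d₁ * d₂ := by
    rw [← hEF]
    exact Dvd.intro _ (IntermediateField.finrank_bot_mul_relfinrank hMle)
  -- positivity
  have hd₁0 : 0 < d₁ := h₁ ▸ Module.finrank_pos
  have hd₂0 : 0 < d₂ := h₂ ▸ Module.finrank_pos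
  have hm0 : 0 < m := Module.finrank_pos
  subst hq
  set q := Fintype.card K with hq
  -- generic step: for β of degree d with β ∈ (fix field of lcm m e), get d ∣ m * e
  -- d₁ ∣ m
  have key : ∀ (G : IntermediateField K Ω) (_ : FiniteDimensional K G) (e : ℕ)
      (H : IntermediateField K Ω) (_ : FiniteDimensional K H)
      (_ : Module.finrank K H = e) (_ : G ≤ M ⊔ H),
      Module.finrank K G ∣ m * e := by
    intro G _ e H _ hHe hle
    obtain ⟨N, hN⟩ := aux_exists_fix (K := K) (Ω := Ω) (Nat.lcm m e)
    have hMN : M ≤ N := fun x hx => (hN x).mpr <|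
      aux_pow_fix_of_dvd (Nat.dvd_lcm_left m e) (aux_pow_q_pow_finrank_eq hx)
    have hHN : H ≤ N := fun x hx => (hN x).mpr <|
      aux_pow_fix_of_dvd (Nat.dvd_lcm_right m e)
        (by rw [← hHe]; exact aux_pow_q_pow_finrank_eq hx)
    have hGN : G ≤ N := hle.trans (sup_le hMN hHN)
    have : Module.finrank K G ∣ Nat.lcm m e :=
      aux_finrank_dvd_of_pow_fix (fun x hx => (hN x).mp (hGN hx))
    exact this.trans (Nat.lcm_dvd (dvd_mul_right m e) (dvd_mul_left e m))
  have hd₁m : d₁ ∣ m := by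
    have hEle : E ≤ M ⊔ F := by
      rw [hE]
      apply IntermediateField.adjoin_le_iff.mpr
      apply Set.singleton_subset_iff.mpr
      have h1 : α₁ * α₂ ∈ M ⊔ F := le_sup_left (a := M) (b := F) hmulM
      have h2 : α₂⁻¹ ∈ M ⊔ F := inv_mem (le_sup_right (a := M) (b := F) hα₂F)
      have := mul_mem h1 h2
      rwa [mul_assoc, mul_inv_cancel₀ hα₂, mul_one] at this
    have := key E inferInstance d₂ F inferInstance h₂ hEle
    rw [h₁] at this
    exact hcop.dvd_of_dvd_mul_right this
  have hd₂m : d₂ ∣ m := by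
    have hFle : F ≤ M ⊔ E := by
      rw [hF]
      apply IntermediateField.adjoin_le_iff.mpr
      apply Set.singleton_subset_iff.mpr
      have h1 : α₁ * α₂ ∈ M ⊔ E := le_sup_left (a := M) (b := E) hmulM
      have h2 : α₁⁻¹ ∈ M ⊔ E := inv_mem (le_sup_right (a := M) (b := E) hα₁E)
      have := mul_mem h1 h2
      rwa [mul_comm α₁ α₂, mul_assoc, mul_inv_cancel₀ hα₁, mul_one] at this
    have := key F inferInstance d₁ E inferInstance h₁ hFle
    rw [h₂] at this
    exact hcop.symm.dvd_of_dvd_mul_right this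
  have hmeq : m = d₁ * d₂ :=
    Nat.dvd_antisymm hmdvd (Nat.Coprime.mul_dvd_of_dvd_of_dvd hcop hd₁m hd₂m)
  haveI : FiniteDimensional K (E ⊔ F : IntermediateField K Ω) :=
    IntermediateField.finiteDimensional_sup E F
  exact ⟨IntermediateField.eq_of_le_of_finrank_eq hMle (by rw [← hm, hmeq, hEF]), hmeq⟩
end

section
/- Let K be a finite field with q elements and let ℓ be a prime dividing q − 1; if ℓ = 2, assume moreover that 4 divides q − 1. Write q − 1 = ℓ^e·ℓ' with ℓ' coprime to ℓ (so e ≥ 1, and e ≥ 2 when ℓ = 2). Let a be a generator of the ℓ-Sylow subgroup of the multiplicative group K^*, i.e. an element of K^* of multiplicative order ℓ^e. Then for every integer δ ≥ 1 the polynomial x^{ℓ^δ} − a is irreducible in K[x]. -/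
/-!
Let `r` be an `ℓ^δ`-th root of `a` in an algebraic closure. As `a` has order `ℓ^e`, `r` has
order `ℓ^(e+δ)`, so `ℓ^(e+δ) ∣ q^d - 1` where `d = [K(r) : K]`. Since `ℓ^e ∥ q - 1` (and
`4 ∣ q - 1` if `ℓ = 2`), lifting the exponent gives `v_ℓ(q^d - 1) = e + v_ℓ(d)`, hence
`ℓ^δ ∣ d`. Together with `d ≤ ℓ^δ` this makes `X^(ℓ^δ) - a` the minimal polynomial of `r`.
-/

open Polynomial IntermediateField

theorem Int.emultiplicity_pow_sub_one {ℓ : ℕ} (hℓ : ℓ.Prime) {x : ℤ} (hx : (ℓ : ℤ) ∣ x - 1)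
    (h2 : ℓ = 2 → 4 ∣ x - 1) (n : ℕ) :
    emultiplicity (ℓ : ℤ) (x ^ n - 1) =
      emultiplicity (ℓ : ℤ) (x - 1) + emultiplicity (ℓ : ℤ) n := by
  have hx' : ¬ (ℓ : ℤ) ∣ x := fun h ↦
    Nat.prime_iff_prime_int.mp hℓ |>.not_dvd_one (by simpa using dvd_sub h hx)
  rcases hℓ.eq_two_or_odd' with rfl | hodd
  · simpa using Int.two_pow_sub_pow' (y := 1) n (h2 rfl) hx'
  · simpa [Int.natCast_emultiplicity] using
      Int.emultiplicity_pow_sub_pow hℓ hodd (y := 1) hx hx' n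

theorem Nat.pow_dvd_of_pow_add_dvd_pow_sub_one {ℓ x e δ d : ℕ} (hℓ : ℓ.Prime) (hx : ℓ ∣ x - 1)
    (h2 : ℓ = 2 → 4 ∣ x - 1) (he : ¬ ℓ ^ (e + 1) ∣ x - 1) (hd : ℓ ^ (e + δ) ∣ x ^ d - 1) :
    ℓ ^ δ ∣ d := by
  -- for `x = 0` the truncated `x - 1` is `0`, which `he` excludes
  have hx1 : 1 ≤ x := by
    by_contra! h
    exact he (by simp [Nat.lt_one_iff.mp h])
  have hxd : 1 ≤ x ^ d := Nat.one_le_pow _ _ hx1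
  replace h2 : ℓ = 2 → (4 : ℤ) ∣ x - 1 := fun h ↦ by
    simpa [Nat.cast_sub hx1] using Int.natCast_dvd_natCast.mpr (h2 h)
  zify [hx1, hxd] at hx he hd ⊢
  rw [pow_dvd_iff_le_emultiplicity, Int.emultiplicity_pow_sub_one hℓ hx h2] at hd
  rw [← emultiplicity_lt_iff_not_dvd, Nat.cast_add, Nat.cast_one,
    ENat.lt_add_one_iff (by simp)] at he
  rw [pow_dvd_iff_le_emultiplicity, ← ENat.add_le_add_iff_left (ENat.natCast_ne_top e)]
  push_cast at hd
  exact hd.trans (by gcongr)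

theorem orderOf_eq_prime_pow_add {G : Type*} [Monoid G] {p e δ : ℕ} [Fact p.Prime] {x y : G}
    (hy : orderOf y = p ^ e) (he : e ≠ 0) (hxy : x ^ p ^ δ = y) : orderOf x = p ^ (e + δ) := by
  obtain ⟨k, rfl⟩ := Nat.exists_eq_add_one_of_ne_zero he
  have hpow : ∀ m, x ^ p ^ (m + δ) = y ^ p ^ m := fun m ↦ by
    rw [← hxy, ← pow_mul, ← pow_add, add_comm]
  rw [add_right_comm]
  refine orderOf_eq_prime_pow ?_ ?_
  · rw [hpow]
    exact pow_ne_one_of_lt_orderOf (pow_ne_zero _ (Fact.out : p.Prime).ne_zero)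
      (hy ▸ Nat.pow_lt_pow_right (Fact.out : p.Prime).one_lt k.lt_add_one)
  · rw [add_right_comm, hpow, ← hy, pow_orderOf_eq_one]

theorem FiniteField.pow_card_pow_finrank_adjoin_sub_one {K L : Type*} [Field K] [Fintype K]
    [Field L] [Algebra K L] {x : L} (hx : IsIntegral K x) (hx0 : x ≠ 0) :
    x ^ (Fintype.card K ^ Module.finrank K K⟮x⟯ - 1) = 1 := by
  have : FiniteDimensional K K⟮x⟯ := adjoin.finiteDimensional hx
  have : Finite K⟮x⟯ := Module.finite_of_finite K
  have : Fintype K⟮x⟯ := Fintype.ofFinite _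
  have hgen : AdjoinSimple.gen K x ≠ 0 := fun h ↦
    hx0 (by simpa using congrArg (algebraMap K⟮x⟯ L) h)
  have key := congrArg (algebraMap K⟮x⟯ L) (FiniteField.pow_card_sub_one_eq_one _ hgen)
  rwa [map_pow, AdjoinSimple.algebraMap_gen, map_one, Module.card_eq_pow_finrank (K := K)] at key

theorem irreducible_of_monic_of_aeval_eq_zero_of_natDegree_le {K L : Type*} [Field K] [Field L]
    [Algebra K L] {p : K[X]} {x : L} (hx : IsIntegral K x) (hp : p.Monic) (hpx : aeval x p = 0)
    (hdeg : p.natDegree ≤ (minpoly K x).natDegree) : Irreducible p :=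
  eq_of_monic_of_dvd_of_natDegree_le (minpoly.monic hx) hp (minpoly.dvd K x hpx) hdeg ▸
    minpoly.irreducible hx

theorem X_pow_sub_C_irreducible_of_sylow_generator_general
    (K : Type*) [Field K] [Fintype K] (q : ℕ) (hq : Fintype.card K = q)
    (ℓ : ℕ) (hℓ : ℓ.Prime) (hdvd : ℓ ∣ q - 1) (h2 : ℓ = 2 → 4 ∣ q - 1)
    (e ℓ' : ℕ) (hfact : q - 1 = ℓ ^ e * ℓ') (hcop : ¬ ℓ ∣ ℓ')
    (a : K) (ha : orderOf a = ℓ ^ e)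
    (δ : ℕ) :
    Irreducible (Polynomial.X ^ (ℓ ^ δ) - Polynomial.C a) := by
  have : Fact ℓ.Prime := ⟨hℓ⟩
  have he : e ≠ 0 := by
    rintro rfl
    exact hcop (by simpa [hfact] using hdvd)
  have hsylow : ¬ ℓ ^ (e + 1) ∣ q - 1 := by
    rw [hfact, pow_succ]
    exact fun h ↦ hcop (Nat.dvd_of_mul_dvd_mul_left (pow_pos hℓ.pos e) h)
  obtain ⟨r, hr⟩ := IsAlgClosed.exists_pow_nat_eq (algebraMap K (AlgebraicClosure K) a)
    (pow_pos hℓ.pos δ)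
  have hint : IsIntegral K r := Algebra.IsIntegral.isIntegral r
  have ha' : orderOf (algebraMap K (AlgebraicClosure K) a) = ℓ ^ e :=
    (orderOf_injective (algebraMap K _).toMonoidHom (algebraMap K _).injective a).trans ha
  have hord : orderOf r = ℓ ^ (e + δ) := orderOf_eq_prime_pow_add ha' he hr
  have hr0 : r ≠ 0 := by
    rintro rfl
    simp [eq_comm, hℓ.ne_zero] at hord
  have hdeg : ℓ ^ δ ∣ (minpoly K r).natDegree := by
    refine Nat.pow_dvd_of_pow_add_dvd_pow_sub_one hℓ hdvd h2 hsylow (hord ▸ hq ▸ ?_)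
    rw [← adjoin.finrank hint]
    exact orderOf_dvd_of_pow_eq_one (FiniteField.pow_card_pow_finrank_adjoin_sub_one hint hr0)
  refine irreducible_of_monic_of_aeval_eq_zero_of_natDegree_le hint
    (monic_X_pow_sub_C a (pow_ne_zero δ hℓ.ne_zero)) (by simp [hr]) ?_
  rw [natDegree_X_pow_sub_C]
  exact Nat.le_of_dvd (minpoly.natDegree_pos hint) hdeg

/-- Let `K` be a finite field with `q` elements, `ℓ` a prime dividing
`q − 1` (with `4 ∣ q − 1` if `ℓ = 2`). Write `q − 1 = ℓ^e·ℓ'` with `ℓ'` coprime to `ℓ`, and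
let `a ∈ K^*` have multiplicative order `ℓ^e`. Then `x^{ℓ^δ} − a` is irreducible in `K[x]`
for every `δ ≥ 1`. -/
theorem X_pow_sub_C_irreducible_of_sylow_generator
    (K : Type*) [Field K] [Fintype K] (q : ℕ) (hq : Fintype.card K = q)
    (ℓ : ℕ) (hℓ : ℓ.Prime) (hdvd : ℓ ∣ q - 1) (h2 : ℓ = 2 → 4 ∣ q - 1)
    (e ℓ' : ℕ) (hfact : q - 1 = ℓ ^ e * ℓ') (hcop : ¬ ℓ ∣ ℓ')
    (a : K) (ha : orderOf a = ℓ ^ e)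
    (δ : ℕ) (hδ : 1 ≤ δ) :
    Irreducible (Polynomial.X ^ (ℓ ^ δ) - Polynomial.C a) :=
  X_pow_sub_C_irreducible_of_sylow_generator_general K q hq ℓ hℓ hdvd h2 e ℓ' hfact hcop a ha δ
end

section
/- Let q be an odd prime power with q ≡ 3 (mod 4), let K be a finite field with q elements, and let L be the extension of K of degree 2, so L has Q = q² elements and 4 divides Q − 1. Write Q − 1 = 2^e·ℓ' with ℓ' odd, and let a ∈ L^* be an element of multiplicative order 2^e (a generator of the 2-Sylow subgroup of L^*). Let δ ≥ 2 be an integer, d = 2^δ, and let ā = a^q be the conjugate of a over K. Then the polynomial f(x) = (x^{d/2} − a)(x^{d/2} − ā) has all its coefficients in K and f(x) is irreducible in K[x] of degree d. -/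
open Polynomial Finset


lemma geom_odd (X m : ℕ) (hX1 : 1 ≤ X) (hX : X % 2 = 1) (hm : Odd m) :
    ∃ S, Odd S ∧ X ^ m - 1 = (X - 1) * S := by
  refine ⟨∑ i ∈ Finset.range m, X ^ i, ?_, ?_⟩
  · have h : ∀ i ∈ Finset.range m, X ^ i % 2 = 1 := by
      intro i _
      rw [Nat.pow_mod, hX]; simp
    rw [Nat.odd_iff, Finset.sum_nat_mod, Finset.sum_congr rfl h]
    simpa using Nat.odd_iff.mp hm
  · have h1 : 1 ≤ X ^ m := Nat.one_le_pow _ _ hX1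
    zify [hX1, h1]
    rw [mul_comm, geom_sum_mul]

lemma pow_two_pow (q e ℓ' : ℕ) (hq : 3 ≤ q) (hq3 : q % 4 = 3)
    (hfact : q ^ 2 - 1 = 2 ^ e * ℓ') (hodd : Odd ℓ') :
    ∀ v, ∃ M, Odd M ∧ q ^ 2 ^ (v + 1) - 1 = 2 ^ (e + v) * M := by
  intro v
  induction v with
  | zero => exact ⟨ℓ', hodd, by simpa using hfact⟩
  | succ v ih =>
    obtain ⟨M, hMo, hM⟩ := ih
    have hA1 : 1 ≤ q ^ 2 ^ (v + 1) := Nat.one_le_pow _ _ (by omega)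
    have hid : q ^ 2 ^ (v + 2) - 1 = (q ^ 2 ^ (v + 1) - 1) * (q ^ 2 ^ (v + 1) + 1) := by
      have h2 : q ^ 2 ^ (v + 2) = (q ^ 2 ^ (v + 1)) ^ 2 := by
        rw [← pow_mul, ← pow_succ]
      have h3 : 1 ≤ (q ^ 2 ^ (v + 1)) ^ 2 := Nat.one_le_pow _ _ (by omega)
      rw [h2]
      zify [hA1, h3]
      ring
    have hmod : q ^ 2 ^ (v + 1) % 4 = 1 := by
      have h1 : q ^ 2 % 4 = 1 := by rw [Nat.pow_mod, hq3]
      have h2 : q ^ 2 ^ (v + 1) = (q ^ 2) ^ 2 ^ v := by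
        rw [← pow_mul, pow_succ, mul_comm]
      rw [h2, Nat.pow_mod, h1, one_pow]; rfl
    obtain ⟨B, hB, hBodd⟩ : ∃ B, q ^ 2 ^ (v + 1) + 1 = 2 * B ∧ Odd B :=
      ⟨(q ^ 2 ^ (v + 1) + 1) / 2, by omega, by rw [Nat.odd_iff]; omega⟩
    refine ⟨M * B, hMo.mul hBodd, ?_⟩
    rw [hid, hM, hB]; ring

lemma nt_key (q e δ k : ℕ) (hq : 3 ≤ q) (hq3 : q % 4 = 3)
    (hfact2 : ∀ v, ∃ M, Odd M ∧ q ^ 2 ^ (v + 1) - 1 = 2 ^ (e + v) * M)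
    (he : 3 ≤ e) (hδ : 2 ≤ δ) (hk : 1 ≤ k) (hdvd : 2 ^ (e + δ - 1) ∣ q ^ k - 1) :
    2 ^ δ ∣ k := by
  obtain ⟨v, m, hm2, hkdecomp⟩ :=
    Nat.exists_eq_pow_mul_and_not_dvd (by omega : k ≠ 0) 2 (by norm_num)
  have hmodd : Odd m := Nat.odd_iff.mpr (by omega)
  by_cases hv0 : v = 0
  · exfalso
    have hkodd : Odd k := by
      rw [hkdecomp, hv0]; simpa using hmodd
    obtain ⟨j, hj⟩ := hkodd
    have h3 : q ^ k % 4 = 3 := by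
      rw [Nat.pow_mod, hq3, hj, pow_succ, pow_mul, Nat.mul_mod, Nat.pow_mod]; norm_num
    have h4 : (4 : ℕ) ∣ q ^ k - 1 :=
      dvd_trans (by rw [show (4:ℕ) = 2 ^ 2 from rfl]; exact pow_dvd_pow 2 (by omega)) hdvd
    have hqk : 1 ≤ q ^ k := Nat.one_le_pow _ _ (by omega)
    omega
  · obtain ⟨M, hMo, hMX⟩ := hfact2 (v - 1)
    rw [show v - 1 + 1 = v from by omega] at hMX
    rw [show e + (v - 1) = e + v - 1 from by omega] at hMX
    have hX1 : 1 ≤ q ^ 2 ^ v := Nat.one_le_pow _ _ (by omega)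
    have hXodd : q ^ 2 ^ v % 2 = 1 := by rw [Nat.pow_mod, show q % 2 = 1 from by omega]; simp
    obtain ⟨S, hSo, hSX⟩ := geom_odd (q ^ 2 ^ v) m hX1 hXodd hmodd
    have hqk : q ^ k - 1 = 2 ^ (e + v - 1) * (M * S) := by
      rw [hkdecomp, pow_mul, hSX, hMX]; ring
    have hcop : Nat.Coprime (2 ^ (e + δ - 1)) (M * S) :=
      Nat.Coprime.pow_left _ ((Nat.prime_two.coprime_iff_not_dvd).mpr
        (by have := Nat.odd_iff.mp (hMo.mul hSo); omega))
    have h2 : 2 ^ (e + δ - 1) ∣ 2 ^ (e + v - 1) :=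
      hcop.dvd_of_dvd_mul_right (by rw [← hqk]; exact hdvd)
    have hle : e + δ - 1 ≤ e + v - 1 := (Nat.pow_dvd_pow_iff_le_right one_lt_two).mp h2
    exact dvd_trans (pow_dvd_pow 2 (by omega)) ⟨m, hkdecomp⟩


lemma mem_range_of_frob_fixed {K L : Type*} [Field K] [Fintype K] [Field L] [Algebra K L]
    (y : L) (hy : y ^ Fintype.card K = y) : ∃ x : K, algebraMap K L x = y := by
  classical
  by_contra hc
  push_neg at hc
  have hq2 : 1 < Fintype.card K := Fintype.one_lt_card
  set P : L[X] := X ^ Fintype.card K - X with hP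
  have hdeg : P.degree = Fintype.card K := by
    rw [hP, Polynomial.degree_sub_eq_left_of_degree_lt, Polynomial.degree_X_pow]
    rw [Polynomial.degree_X_pow, Polynomial.degree_X]
    exact_mod_cast hq2
  have hP0 : P ≠ 0 := fun h => by simp [h] at hdeg
  have hroot : ∀ z : L, z ^ Fintype.card K = z → z ∈ P.roots.toFinset := by
    intro z hz
    rw [Multiset.mem_toFinset, Polynomial.mem_roots hP0]
    simp [Polynomial.IsRoot, hP, sub_eq_zero, hz]
  set s : Finset L := Finset.univ.image (algebraMap K L) with hs
  have hsub : insert y s ⊆ P.roots.toFinset := by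
    intro z hz
    rcases Finset.mem_insert.mp hz with rfl | hzs
    · exact hroot z hy
    · obtain ⟨x, _, rfl⟩ := Finset.mem_image.mp hzs
      exact hroot _ (by rw [← map_pow, FiniteField.pow_card])
  have hys : y ∉ s := by
    intro h; obtain ⟨x, _, hx⟩ := Finset.mem_image.mp h; exact hc x hx
  have hcard : Fintype.card K + 1 ≤ P.roots.toFinset.card := by
    have h1 : (insert y s).card = Fintype.card K + 1 := by
      rw [Finset.card_insert_of_notMem hys,
        Finset.card_image_of_injective _ (algebraMap K L).injective, Finset.card_univ]
    rw [← h1]; exact Finset.card_le_card hsub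
  have hle : P.roots.toFinset.card ≤ Fintype.card K := by
    calc P.roots.toFinset.card ≤ P.roots.card := Multiset.toFinset_card_le _
    _ ≤ P.natDegree := Polynomial.card_roots' P
    _ = Fintype.card K := Polynomial.natDegree_eq_of_degree_eq_some hdeg
  omega

/-- Let `K` be a finite field with `q ≡ 3 (mod 4)` elements and `L` its
quadratic extension, with `Q = q²` elements. Write `Q − 1 = 2^e·ℓ'` with `ℓ'` odd and let
`a ∈ L^*` have multiplicative order `2^e`. For `δ ≥ 2` and `d = 2^δ`, the polynomial
`f(x) = (x^{d/2} − a)(x^{d/2} − a^q)` has coefficients in `K` and is irreducible in `K[x]`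
of degree `d`. -/
theorem special_case_irreducible
    (K L : Type*) [Field K] [Fintype K] [Field L] [Algebra K L]
    (q : ℕ) (hq : Fintype.card K = q) (hq3 : q % 4 = 3)
    (hdim : Module.finrank K L = 2)
    (e ℓ' : ℕ) (hfact : q ^ 2 - 1 = 2 ^ e * ℓ') (hodd : Odd ℓ')
    (a : L) (ha : orderOf a = 2 ^ e)
    (δ : ℕ) (hδ : 2 ≤ δ) (d : ℕ) (hd : d = 2 ^ δ) :
    ∃ g : Polynomial K,
      g.map (algebraMap K L)
          = (Polynomial.X ^ (d / 2) - Polynomial.C a)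
            * (Polynomial.X ^ (d / 2) - Polynomial.C (a ^ q))
        ∧ Irreducible g ∧ g.natDegree = d := by
  have hq2 : 1 < q := hq ▸ Fintype.one_lt_card
  have hq3' : 3 ≤ q := by omega
  -- e ≥ 3
  have h8 : q ^ 2 % 8 = 1 := by
    have h1 : q % 8 % 4 = 3 := by
      rw [Nat.mod_mod_of_dvd q (by norm_num : (4:ℕ) ∣ 8)]; exact hq3
    have h2 : q % 8 < 8 := Nat.mod_lt _ (by norm_num)
    have h3 : q % 8 = 3 ∨ q % 8 = 7 := by omega
    rcases h3 with h | h <;> rw [Nat.pow_mod, h] <;> rfl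
  have hq21 : 1 ≤ q ^ 2 := Nat.one_le_pow _ _ (by omega)
  have he3 : 3 ≤ e := by
    have h8d : (8:ℕ) ∣ q ^ 2 - 1 := by omega
    rw [hfact] at h8d
    have hcop : Nat.Coprime (2 ^ 3) ℓ' :=
      Nat.Coprime.pow_left _ ((Nat.prime_two.coprime_iff_not_dvd).mpr
        (by have := Nat.odd_iff.mp hodd; omega))
    have h23 : (2:ℕ) ^ 3 ∣ 2 ^ e :=
      hcop.dvd_of_dvd_mul_right (by exact_mod_cast h8d)
    exact (Nat.pow_dvd_pow_iff_le_right one_lt_two).mp h23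
  -- L is finite with q^2 elements
  haveI : Module.Finite K L := Module.finite_of_finrank_eq_succ (by rw [hdim])
  haveI : Finite L := Module.finite_of_finite K
  letI : Fintype L := Fintype.ofFinite L
  have hcardL : Fintype.card L = q ^ 2 := by
    rw [Module.card_eq_pow_finrank (K := K) (V := L), hq, hdim]
  -- facts about a
  have ha0 : a ≠ 0 := by
    intro h
    have h1 := pow_orderOf_eq_one a
    rw [ha, h, zero_pow (by positivity : (0:ℕ) < 2 ^ e).ne'] at h1
    exact zero_ne_one h1
  have haL : a ^ (q * q) = a := by
    have h1 := FiniteField.pow_card a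
    rwa [hcardL, pow_two] at h1
  -- Frobenius is additive
  have hfrob : ∀ x y : L, (x + y) ^ q = x ^ q + y ^ q := by
    have hpK : CharP K (ringChar K) := ringChar.charP K
    haveI : Fact (ringChar K).Prime := ⟨CharP.char_is_prime K (ringChar K)⟩
    haveI : CharP L (ringChar K) :=
      charP_of_injective_algebraMap (algebraMap K L).injective (ringChar K)
    obtain ⟨n, hnp, hqpn⟩ := FiniteField.card K (ringChar K)
    intro x y
    rw [← hq, hqpn]
    exact add_pow_char_pow x y (ringChar K) n
  have hfix1 : (a + a ^ q) ^ q = a + a ^ q := by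
    rw [hfrob, ← pow_mul, haL, add_comm]
  have hfix2 : (a ^ (q + 1)) ^ q = a ^ (q + 1) := by
    rw [← pow_mul, show (q + 1) * q = q * q + q from by ring, pow_add, haL, ← pow_succ']
  obtain ⟨s, hs⟩ := mem_range_of_frob_fixed (a + a ^ q) (by rw [hq]; exact hfix1)
  obtain ⟨t, ht⟩ := mem_range_of_frob_fixed (a ^ (q + 1)) (by rw [hq]; exact hfix2)
  -- basic facts about d
  have hd0 : 0 < d := by rw [hd]; positivity
  have hdeven : d = 2 ^ (δ - 1) * 2 := by
    rw [hd, ← pow_succ, show δ - 1 + 1 = δ from by omega]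
  have hd2 : d / 2 = 2 ^ (δ - 1) := by omega
  have hdd : d / 2 + d / 2 = d := by omega
  have hd2lt : d / 2 < d := by
    have : 0 < 2 ^ (δ - 1) := by positivity
    omega
  -- the polynomial g
  set g : K[X] := X ^ d - C s * X ^ (d / 2) + C t with hg
  have hmap : g.map (algebraMap K L)
      = (X ^ (d / 2) - C a) * (X ^ (d / 2) - C (a ^ q)) := by
    have hXd : (X : L[X]) ^ d = X ^ (d / 2) * X ^ (d / 2) := by rw [← pow_add, hdd]
    rw [hg]
    simp only [Polynomial.map_add, Polynomial.map_sub, Polynomial.map_mul,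
      Polynomial.map_pow, Polynomial.map_X, Polynomial.map_C, hs, ht]
    rw [hXd]
    have hC1 : (C (a + a ^ q) : L[X]) = C a + C (a ^ q) := by rw [map_add]
    have hC2 : (C (a ^ (q + 1)) : L[X]) = C a * C (a ^ q) := by
      rw [← C_mul, ← pow_succ']
    rw [hC1, hC2]; ring
  have hlt : (C t - C s * X ^ (d / 2)).degree < (X ^ d : K[X]).degree := by
    rw [Polynomial.degree_X_pow]
    refine lt_of_le_of_lt (Polynomial.degree_sub_le _ _) (max_lt ?_ ?_)
    · exact lt_of_le_of_lt Polynomial.degree_C_le (by exact_mod_cast hd0)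
    · exact lt_of_le_of_lt (Polynomial.degree_C_mul_X_pow_le _ _) (by exact_mod_cast hd2lt)
  have hgsplit : g = X ^ d + (C t - C s * X ^ (d / 2)) := by rw [hg]; ring
  have hmono : g.Monic := by
    rw [hgsplit]; exact (Polynomial.monic_X_pow d).add_of_left hlt
  have hdeg : g.natDegree = d := by
    apply Polynomial.natDegree_eq_of_degree_eq_some
    rw [hgsplit, Polynomial.degree_add_eq_left_of_degree_lt hlt, Polynomial.degree_X_pow]
  -- pass to an algebraic closure
  set M := AlgebraicClosure L with hM
  obtain ⟨α, hα⟩ := IsAlgClosed.exists_pow_nat_eq (algebraMap L M a)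
    (n := d / 2) (by rw [hd2]; positivity)
  have hb0 : algebraMap L M a ≠ 0 := fun h => ha0 (by
    apply (algebraMap L M).injective; rw [h, map_zero])
  have hbord : orderOf (algebraMap L M a) = 2 ^ e := by
    rw [← ha]
    exact orderOf_injective (algebraMap L M).toMonoidHom (algebraMap L M).injective a
  have hα0 : α ≠ 0 := fun h => hb0 (by rw [← hα, h, zero_pow (by omega)])
  have haeval : Polynomial.aeval α g = 0 := by
    rw [Polynomial.aeval_def, Polynomial.eval₂_eq_eval_map,
      IsScalarTower.algebraMap_eq K L M, ← Polynomial.map_map, hmap]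
    simp only [Polynomial.map_mul, Polynomial.map_sub, Polynomial.map_pow,
      Polynomial.map_X, Polynomial.map_C, Polynomial.eval_mul, Polynomial.eval_sub,
      Polynomial.eval_pow, Polynomial.eval_X, Polynomial.eval_C]
    rw [hα, sub_self, zero_mul]
  have hint : IsIntegral K α := ⟨g, hmono, haeval⟩
  have hdvd : minpoly K α ∣ g := minpoly.dvd K α haeval
  set k := (minpoly K α).natDegree with hk
  have hk1 : 1 ≤ k := minpoly.natDegree_pos hint
  have hkd : k ≤ d := by
    rw [← hdeg]; exact Polynomial.natDegree_le_of_dvd hdvd hmono.ne_zero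
  -- order of α
  have hαord : orderOf α = 2 ^ (e + δ - 1) := by
    have hpow1 : α ^ 2 ^ (e + δ - 1) = 1 := by
      rw [show (2:ℕ) ^ (e + δ - 1) = 2 ^ (δ - 1) * 2 ^ e from by
        rw [← pow_add]; congr 1; omega]
      rw [pow_mul, ← hd2, hα, ← hbord, pow_orderOf_eq_one]
    have hnot : ¬ (orderOf α ∣ 2 ^ (e + δ - 2)) := by
      intro hdv
      have h1 : α ^ 2 ^ (e + δ - 2) = 1 := orderOf_dvd_iff_pow_eq_one.mp hdv
      rw [show (2:ℕ) ^ (e + δ - 2) = 2 ^ (δ - 1) * 2 ^ (e - 1) from by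
        rw [← pow_add]; congr 1; omega] at h1
      rw [pow_mul, ← hd2, hα] at h1
      have h3 : (2:ℕ) ^ e ∣ 2 ^ (e - 1) := hbord ▸ orderOf_dvd_of_pow_eq_one h1
      have := (Nat.pow_dvd_pow_iff_le_right one_lt_two).mp h3
      omega
    have hdvd1 : orderOf α ∣ 2 ^ (e + δ - 1) := orderOf_dvd_of_pow_eq_one hpow1
    obtain ⟨i, hile, hio⟩ := (Nat.dvd_prime_pow Nat.prime_two).mp hdvd1
    by_cases hi : i = e + δ - 1
    · rw [hio, hi]
    · exact absurd (hio ▸ pow_dvd_pow 2 (by omega : i ≤ e + δ - 2)) hnot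
  -- α ^ (q ^ k) = α
  have hfrobk : α ^ q ^ k = α := by
    haveI := IntermediateField.adjoin.finiteDimensional hint
    haveI : Finite (IntermediateField.adjoin K {α}) := Module.finite_of_finite K
    letI : Fintype (IntermediateField.adjoin K {α}) := Fintype.ofFinite _
    have hcardF : Fintype.card (IntermediateField.adjoin K {α}) = q ^ k := by
      rw [Module.card_eq_pow_finrank (K := K), hq, IntermediateField.adjoin.finrank hint]
    have h1 : (IntermediateField.AdjoinSimple.gen K α) ^ q ^ k
        = IntermediateField.AdjoinSimple.gen K α := by
      rw [← hcardF]; exact FiniteField.pow_card _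
    have h2 := congrArg (algebraMap (IntermediateField.adjoin K {α}) M) h1
    rwa [map_pow, IntermediateField.AdjoinSimple.algebraMap_gen] at h2
  have hqk1 : 1 ≤ q ^ k := Nat.one_le_pow _ _ (by omega)
  have horddvd : 2 ^ (e + δ - 1) ∣ q ^ k - 1 := by
    rw [← hαord]
    apply orderOf_dvd_of_pow_eq_one
    have h1 : α ^ (q ^ k - 1) * α = 1 * α := by
      rw [one_mul, ← pow_succ, show q ^ k - 1 + 1 = q ^ k from by omega, hfrobk]
    exact mul_right_cancel₀ hα0 h1
  have h2δk : 2 ^ δ ∣ k :=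
    nt_key q e δ k hq3' hq3 (pow_two_pow q e ℓ' hq3' hq3 hfact hodd) he3 hδ hk1 horddvd
  have hkeq : k = d := le_antisymm hkd (hd ▸ Nat.le_of_dvd (by omega) h2δk)
  -- g is the minimal polynomial, hence irreducible
  obtain ⟨c, hc⟩ := hdvd
  have hc0 : c ≠ 0 := fun h => hmono.ne_zero (by rw [hc, h, mul_zero])
  have hcdeg : c.natDegree = 0 := by
    have h1 := Polynomial.natDegree_mul (minpoly.ne_zero hint) hc0
    rw [← hc, hdeg, ← hk, hkeq] at h1
    omega
  have hcC : c = C (c.coeff 0) := Polynomial.eq_C_of_natDegree_eq_zero hcdeg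
  have hc1 : c.coeff 0 = 1 := by
    have h1 : (minpoly K α * c).leadingCoeff = 1 := by rw [← hc]; exact hmono.leadingCoeff
    rwa [Polynomial.leadingCoeff_mul, (minpoly.monic hint).leadingCoeff, one_mul, hcC,
      Polynomial.leadingCoeff_C] at h1
  have hgeq : g = minpoly K α := by rw [hc, hcC, hc1, map_one, mul_one]
  exact ⟨g, hmap, hgeq ▸ minpoly.irreducible hint, hdeg⟩
end

section
/- Fix a prime p and an algebraic closure Ω of the prime field F_p; F_p denotes the prime subfield of Ω. For every nonzero a ∈ Ω, the degree p polynomial X^p − a·(X^{p−1} + ⋯ + X² + X) − 1 ∈ Ω[X] is separable (it has p distinct roots in Ω), and none of its roots lies in F_p. In particular, the rational map I(X) = (X^p − 1)/(X + X² + ⋯ + X^{p−1}) defines an unramified covering from Ω ∖ F_p onto Ω ∖ {0}: every nonzero a ∈ Ω has exactly p preimages under I, all outside F_p. -/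
open Polynomial Finset

/-- Let `Ω` be an algebraic closure of `F_p`. For every nonzero `a ∈ Ω`,
the degree `p` polynomial `X^p − a·(X^{p−1} + ⋯ + X) − 1` is separable with `p` distinct
roots in `Ω`, none of which lies in the prime field `F_p`. Hence the rational map
`I(X) = (X^p−1)/(X + ⋯ + X^{p−1})` is an unramified covering `Ω ∖ F_p → Ω ∖ {0}`. -/
theorem artin_schreier_covering_fiber
    (p : ℕ) [Fact p.Prime] (Ω : Type*) [Field Ω]
    [Algebra (ZMod p) Ω] [IsAlgClosure (ZMod p) Ω]
    (a : Ω) (ha : a ≠ 0) :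
    (Polynomial.X ^ p
        - Polynomial.C a * (∑ i ∈ Finset.Icc 1 (p - 1), Polynomial.X ^ i)
        - 1 : Polynomial Ω).Separable
      ∧ (Polynomial.X ^ p
          - Polynomial.C a * (∑ i ∈ Finset.Icc 1 (p - 1), Polynomial.X ^ i)
          - 1 : Polynomial Ω).roots.card = p
      ∧ ∀ b : Ω,
          Polynomial.eval b
            (Polynomial.X ^ p
              - Polynomial.C a * (∑ i ∈ Finset.Icc 1 (p - 1), Polynomial.X ^ i)
              - 1 : Polynomial Ω) = 0
          → b ∉ Set.range (algebraMap (ZMod p) Ω) := by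
  have hp : p.Prime := Fact.out
  have hp2 : 2 ≤ p := hp.two_le
  have hp1 : 1 ≤ p := hp.one_lt.le
  haveI : CharP Ω p := charP_of_injective_algebraMap (algebraMap (ZMod p) Ω).injective p
  haveI : IsAlgClosed Ω := IsAlgClosure.isAlgClosed (ZMod p)
  set S : Polynomial Ω := ∑ i ∈ Finset.Icc 1 (p - 1), Polynomial.X ^ i with hS
  set f : Polynomial Ω := X ^ p - C a * S - 1 with hf
  -- range p = insert 0 (Icc 1 (p-1))
  have hrange : Finset.range p = insert 0 (Finset.Icc 1 (p - 1)) := by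
    ext i; simp [Finset.mem_range, Finset.mem_Icc]; omega
  have hgeom : S + 1 = ∑ i ∈ Finset.range p, (X : Polynomial Ω) ^ i := by
    rw [hrange, Finset.sum_insert (by simp)]; ring
  have hA : (X - 1 : Polynomial Ω) * (S + 1) = X ^ p - 1 := by
    rw [hgeom, mul_comm, geom_sum_mul]
  have hXp : (X : Polynomial Ω) ^ p - 1 = (X - 1) ^ p := by
    rw [sub_pow_char]; simp
  have hX1 : (X - 1 : Polynomial Ω) ≠ 0 := by
    have := Polynomial.X_sub_C_ne_zero (1 : Ω); simpa using this
  have hB : S + 1 = (X - 1 : Polynomial Ω) ^ (p - 1) := by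
    apply mul_left_cancel₀ hX1
    rw [hA, hXp, ← pow_succ']
    congr 1; omega
  have hS' : S = (X - 1 : Polynomial Ω) ^ (p - 1) - 1 := by
    rw [← hB]; ring
  have hfalt : f = (X - 1) ^ p - C a * (X - 1) ^ (p - 1) + C a := by
    rw [hf, hS', ← hXp]; ring
  -- derivative
  have hderiv : derivative f = C a * (X - 1) ^ (p - 2) := by
    rw [hfalt]
    rw [derivative_add, derivative_sub, derivative_pow, derivative_mul, derivative_pow]
    simp only [derivative_sub, derivative_X, derivative_one, derivative_C, sub_zero, mul_one,
      zero_mul, zero_add]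
    have h1 : (C ((p : ℕ) : Ω) : Polynomial Ω) = 0 := by
      simp [CharP.cast_eq_zero]
    have h2 : (C ((p - 1 : ℕ) : Ω) : Polynomial Ω) = -1 := by
      rw [Nat.cast_sub hp1, CharP.cast_eq_zero]; simp
    have h3 : p - 1 - 1 = p - 2 := by omega
    rw [h1, h2, h3]; ring
  have heval1 : f.eval 1 = a := by
    have hp1' : p - 1 ≠ 0 := by omega
    rw [hfalt]; simp [zero_pow hp.ne_zero, zero_pow hp1']
  -- not divisible by X - 1
  have hnd : ¬ (X - 1 : Polynomial Ω) ∣ f := by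
    intro h
    have : f.eval 1 = 0 := by
      have h' : (X - C (1:Ω)) ∣ f := by simpa using h
      exact (Polynomial.dvd_iff_isRoot.mp h')
    rw [heval1] at this; exact ha this
  have hcop : IsCoprime f ((X - 1 : Polynomial Ω) ^ (p - 2)) := by
    refine IsCoprime.pow_right ?_
    have h := (Polynomial.irreducible_X_sub_C (1:Ω)).coprime_iff_not_dvd.mpr
      (by simpa using hnd)
    simpa using h.symm
  have hsep : f.Separable := by
    rw [Polynomial.Separable, hderiv]
    exact (isCoprime_mul_unit_left_right (isUnit_C.mpr (Ne.isUnit ha)) _ _).mpr hcop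
  -- degree
  have hdegS : S.natDegree ≤ p - 1 := by
    refine Polynomial.natDegree_sum_le_of_forall_le _ _ fun i hi => ?_
    simp only [Finset.mem_Icc] at hi
    simpa using hi.2
  have hdeg : f.natDegree = p := by
    have h1 : (C a * S + 1).natDegree < (X ^ p : Polynomial Ω).natDegree := by
      rw [Polynomial.natDegree_X_pow]
      calc (C a * S + 1).natDegree ≤ max (C a * S).natDegree (1 : Polynomial Ω).natDegree :=
              Polynomial.natDegree_add_le _ _
        _ ≤ p - 1 := by
              simp only [Polynomial.natDegree_one, max_le_iff]
              constructor
              · exact le_trans (Polynomial.natDegree_mul_le) (by simpa using hdegS)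
              · omega
        _ < p := by omega
    have : f = X ^ p - (C a * S + 1) := by rw [hf]; ring
    rw [this, Polynomial.natDegree_sub_eq_left_of_natDegree_lt h1, Polynomial.natDegree_X_pow]
  have hroots : f.roots.card = p := by
    rw [← hdeg]
    exact (Polynomial.splits_iff_card_roots.mp (IsAlgClosed.splits f))
  refine ⟨hsep, hroots, ?_⟩
  rintro b hb ⟨c, rfl⟩
  set b := algebraMap (ZMod p) Ω c with hbdef
  have hbp : b ^ p = b := by
    rw [hbdef, ← map_pow, ZMod.pow_card]
  have hevalS : (b - 1) * (S.eval b) = 0 := by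
    have := congrArg (Polynomial.eval b) hA
    simp only [Polynomial.eval_mul, Polynomial.eval_add, Polynomial.eval_sub,
      Polynomial.eval_X, Polynomial.eval_one, Polynomial.eval_pow] at this
    have h2 : (b - 1) * S.eval b = b ^ p - 1 - (b - 1) := by
      linear_combination this
    rw [h2, hbp]; ring
  have hevalf : b ^ p - a * S.eval b - 1 = 0 := by
    have := hb
    simp only [hf, Polynomial.eval_sub, Polynomial.eval_mul, Polynomial.eval_pow,
      Polynomial.eval_X, Polynomial.eval_one, Polynomial.eval_C] at this
    exact this
  rcases mul_eq_zero.mp hevalS with h | h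
  · -- b = 1
    have hb1 : b = 1 := sub_eq_zero.mp h
    have hS1 : S.eval 1 = ((p - 1 : ℕ) : Ω) := by
      rw [hS]; simp [Polynomial.eval_finset_sum]
    have hcast : ((p - 1 : ℕ) : Ω) = -1 := by
      rw [Nat.cast_sub hp1, CharP.cast_eq_zero]; ring
    rw [hb1, one_pow, hS1, hcast] at hevalf
    apply ha; linear_combination hevalf
  · rw [h, hbp] at hevalf
    have hb1 : b = 1 := by linear_combination hevalf
    rw [hb1] at h
    -- S.eval 1 = -1 ≠ 0
    have hS1 : S.eval 1 = ((p - 1 : ℕ) : Ω) := by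
      rw [hS]; simp [Polynomial.eval_finset_sum]
    have hcast : ((p - 1 : ℕ) : Ω) = -1 := by
      rw [Nat.cast_sub hp1, CharP.cast_eq_zero]; ring
    rw [hS1, hcast] at h
    exact one_ne_zero (neg_eq_zero.mp h)
end

section
/- Let q be a prime power and K a finite field with q elements. Then the number of quintuples (a₁, a₂, a₃, a₄, a₆) ∈ K⁵ for which the Weierstrass curve y² + a₁xy + a₃y = x³ + a₂x² + a₄x + a₆ has nonzero discriminant equals q⁵ − q⁴ = (q − 1)·q³·q. Equivalently, the number of quintuples with zero discriminant is q⁴. (This expresses that the weighted number Σ_{[E]} 1/#Aut_K(E) of K-isomorphism classes of elliptic curves over K equals q, since each isomorphism class [E] corresponds to exactly #A(K)/#Aut_K(E) Weierstrass models, where the group A(K) of substitutions x ↦ u²x + r, y ↦ u³y + su²x + t with u ∈ K^*, r, s, t ∈ K has cardinality (q − 1)·q³.) -/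
/-!
It suffices to show that `q⁴` quintuples have `Δ = 0`. If `2` and `3` are invertible, every
quintuple arises from exactly one short curve `y² = x³ + Ax + B` by exactly one substitution
`x ↦ x + r, y ↦ y + sx + t`; such substitutions leave `Δ = -16(4A³ + 27B²)` unchanged, and the
cuspidal cubic `4A³ + 27B² = 0` has exactly `q` points `(-3u², 2u³)`, giving `q³ · q`.
In characteristic `2` or `3`, `Δ` is affine in `a₆`: for each `(a₁, a₂, a₃, a₄)` there is one
root `a₆` unless the leading coefficient vanishes, and on that locus (`a₁ = 0`, resp.
`a₂ = -a₁²`) the fibres that are all of `K` exactly make up for the empty ones.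
-/

open Finset

lemma card_filter_mul_add_eq_zero {K : Type*} [Field K] [Fintype K] [DecidableEq K] (a b : K) :
    #{x | a * x + b = 0} = if a = 0 then if b = 0 then Fintype.card K else 0 else 1 := by
  split_ifs with ha hb
  · simp [ha, hb]
  · simp [ha, hb]
  · rw [card_eq_one]
    exact ⟨-b / a, by ext x; simp [eq_div_iff ha, add_eq_zero_iff_eq_neg, mul_comm]⟩

lemma card_cusp {K : Type*} [Field K] (h2 : (2 : K) ≠ 0) (h3 : (3 : K) ≠ 0) :
    Nat.card {v : K × K // 4 * v.1 ^ 3 + 27 * v.2 ^ 2 = 0} = Nat.card K := by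
  refine (Nat.card_congr (Equiv.ofBijective (fun u : K =>
    (⟨(-3 * u ^ 2, 2 * u ^ 3), by ring⟩ : {v : K × K // 4 * v.1 ^ 3 + 27 * v.2 ^ 2 = 0}))
    ⟨?_, ?_⟩)).symm
  · intro u v h
    simp only [Subtype.mk.injEq, Prod.mk.injEq] at h
    obtain ⟨hsq, hcube⟩ := h
    have hsq : u ^ 2 = v ^ 2 := mul_left_cancel₀ (neg_ne_zero.2 h3) hsq
    have hcube : u ^ 3 = v ^ 3 := mul_left_cancel₀ h2 hcube
    rcases eq_or_ne u 0 with rfl | hu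
    · exact ((pow_eq_zero_iff two_ne_zero).1 (by rw [← hsq, zero_pow two_ne_zero])).symm
    · exact mul_right_cancel₀ (pow_ne_zero 2 hu) (by linear_combination hcube - v * hsq)
  · rintro ⟨⟨A, B⟩, h⟩
    rcases eq_or_ne A 0 with rfl | hA
    · obtain rfl : B = 0 := by
        have : (27 : K) ≠ 0 := by simpa [← show (3 : K) ^ 3 = 27 by norm_num] using h3
        simpa [this] using h
      exact ⟨0, by simp⟩
    · refine ⟨-(3 * B) / (2 * A), Subtype.ext (Prod.ext ?_ ?_)⟩ <;> dsimp only at h ⊢ <;> field_simp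
      · linear_combination -h
      · linear_combination -B * h

namespace WeierstrassCurve

variable {K : Type*} [Field K]

def coeffEquiv : K × K × K × K × K ≃ WeierstrassCurve K where
  toFun c := ⟨c.1, c.2.1, c.2.2.1, c.2.2.2.1, c.2.2.2.2⟩
  invFun W := (W.a₁, W.a₂, W.a₃, W.a₄, W.a₆)
  left_inv _ := rfl
  right_inv _ := rfl

lemma card_singular_eq_sum [Fintype K] [DecidableEq K] :
    Nat.card {c : K × K × K × K × K // (coeffEquiv c).Δ = 0} =
      ∑ a₁, ∑ a₂, ∑ a₃, ∑ a₄, #{a₆ | (⟨a₁, a₂, a₃, a₄, a₆⟩ : WeierstrassCurve K).Δ = 0} := by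
  simp only [Nat.card_eq_fintype_card, Fintype.card_subtype, card_filter, Fintype.sum_prod_type]
  rfl

lemma card_singular_of_char_two [Fintype K] [CharP K 2] :
    Nat.card {c : K × K × K × K × K // (coeffEquiv c).Δ = 0} = Fintype.card K ^ 4 := by
  -- with `classical` the filter instances would not match those of `card_filter_mul_add_eq_zero`
  let _ := Classical.decEq K
  have hΔ (a₁ a₂ a₃ a₄ a₆ : K) : (⟨a₁, a₂, a₃, a₄, a₆⟩ : WeierstrassCurve K).Δ =
      a₁ ^ 6 * a₆ +
        (a₁ ^ 4 * (a₁ * a₃ * a₄ + a₂ * a₃ ^ 2 + a₄ ^ 2) + a₃ ^ 4 + a₁ ^ 3 * a₃ ^ 3) := by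
    rw [Δ_of_char_two, b₈_of_char_two]
    ring
  have h_fibre (a₁ : K) : ∑ a₂ : K, ∑ a₃ : K, ∑ a₄ : K,
      (if a₁ ^ 6 = 0 then
        if a₁ ^ 4 * (a₁ * a₃ * a₄ + a₂ * a₃ ^ 2 + a₄ ^ 2) + a₃ ^ 4 + a₁ ^ 3 * a₃ ^ 3 = 0
        then Fintype.card K else 0
      else 1) = Fintype.card K ^ 3 := by
    rcases eq_or_ne a₁ 0 with rfl | h
    · simp [pow_three]
    · simp [h, pow_three]
  rw [card_singular_eq_sum]
  simp only [hΔ, card_filter_mul_add_eq_zero, h_fibre, sum_const, card_univ]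
  ring

lemma card_singular_of_char_three [Fintype K] [CharP K 3] :
    Nat.card {c : K × K × K × K × K // (coeffEquiv c).Δ = 0} = Fintype.card K ^ 4 := by
  let _ := Classical.decEq K
  have hΔ (a₁ a₂ a₃ a₄ a₆ : K) : (⟨a₁, a₂, a₃, a₄, a₆⟩ : WeierstrassCurve K).Δ =
      -(a₁ ^ 2 + a₂) ^ 3 * a₆ +
        ((a₁ * a₃ - a₄) ^ 3 - (a₁ ^ 2 + a₂) ^ 2 * (a₂ * a₃ ^ 2 - a₁ * a₃ * a₄ - a₄ ^ 2)) := by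
    rw [Δ_of_char_three, b₂_of_char_three, b₄_of_char_three, b₈_of_char_three]
    linear_combination -3 * (a₁ * a₃ - a₄) ^ 3 * CharP.cast_eq_zero K 3
  have h_fibre (a₁ a₂ : K) : ∑ a₃ : K, ∑ a₄ : K,
      (if -(a₁ ^ 2 + a₂) ^ 3 = 0 then
        if (a₁ * a₃ - a₄) ^ 3 - (a₁ ^ 2 + a₂) ^ 2 * (a₂ * a₃ ^ 2 - a₁ * a₃ * a₄ - a₄ ^ 2) = 0
        then Fintype.card K else 0
      else 1) = Fintype.card K ^ 2 := by
    by_cases h : a₁ ^ 2 + a₂ = 0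
    · simp [h, sub_eq_zero, sum_ite_eq, ← sq]
    · simp [h, ← sq]
  rw [card_singular_eq_sum]
  simp only [hΔ, card_filter_mul_add_eq_zero, h_fibre, sum_const, card_univ]
  ring

/-- The curve `y² = x³ + Ax + B` after the substitution `x ↦ x + r, y ↦ y + sx + t`. -/
def shortModel (p : (K × K) × (K × K × K)) : WeierstrassCurve K :=
  (⟨1, p.2.1, p.2.2.1, p.2.2.2⟩ : VariableChange K) • ⟨0, 0, 0, p.1.1, p.1.2⟩

lemma shortModel_eq_mk (A B r s t : K) :
    shortModel ((A, B), (r, s, t)) =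
      ⟨2 * s, 3 * r - s ^ 2, 2 * t, A + 3 * r ^ 2 - 2 * s * t, B + r * A + r ^ 3 - t ^ 2⟩ := by
  ext <;> simp only [shortModel, variableChange_a₁, variableChange_a₂, variableChange_a₃,
    variableChange_a₄, variableChange_a₆, Units.val_one, inv_one, one_pow, one_mul] <;> ring

lemma Δ_shortModel (p : (K × K) × (K × K × K)) :
    (shortModel p).Δ = -16 * (4 * p.1.1 ^ 3 + 27 * p.1.2 ^ 2) := by
  rw [shortModel, variableChange_Δ]
  simp only [Units.val_one, inv_one, one_pow, one_mul, Δ, b₂, b₄, b₆, b₈]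
  ring

lemma shortModel_bijective (h2 : (2 : K) ≠ 0) (h3 : (3 : K) ≠ 0) :
    Function.Bijective (shortModel (K := K)) := by
  constructor
  · rintro ⟨⟨A, B⟩, r, s, t⟩ ⟨⟨A', B'⟩, r', s', t'⟩ h
    simp only [shortModel_eq_mk, mk.injEq] at h
    obtain ⟨h₁, h₂, h₃, h₄, h₆⟩ := h
    obtain rfl : s = s' := mul_left_cancel₀ h2 h₁
    obtain rfl : r = r' := mul_left_cancel₀ h3 (by linear_combination h₂)
    obtain rfl : t = t' := mul_left_cancel₀ h2 h₃
    obtain rfl : A = A' := by linear_combination h₄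
    obtain rfl : B = B' := by linear_combination h₆
    rfl
  · intro W
    set s := W.a₁ / 2
    set r := (W.a₂ + s ^ 2) / 3
    set t := W.a₃ / 2
    set A := W.a₄ - 3 * r ^ 2 + 2 * s * t
    refine ⟨((A, W.a₆ - r * A - r ^ 3 + t ^ 2), (r, s, t)), ?_⟩
    rw [shortModel_eq_mk]
    ext <;> simp only [s, r, t, A] <;> field_simp <;> ring

lemma card_singular_of_two_ne_zero_of_three_ne_zero [Fintype K] (h2 : (2 : K) ≠ 0)
    (h3 : (3 : K) ≠ 0) :
    Nat.card {c : K × K × K × K × K // (coeffEquiv c).Δ = 0} = Fintype.card K ^ 4 := by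
  have h16 : (-16 : K) ≠ 0 := by simpa [← show (2 : K) ^ 4 = 16 by norm_num] using h2
  calc Nat.card {c : K × K × K × K × K // (coeffEquiv c).Δ = 0}
      = Nat.card {p : (K × K) × (K × K × K) // (shortModel p).Δ = 0} :=
        Nat.card_congr <| (coeffEquiv.subtypeEquiv (q := fun W => W.Δ = 0) fun _ => Iff.rfl).trans
          ((Equiv.ofBijective _ (shortModel_bijective h2 h3)).subtypeEquiv fun _ => Iff.rfl).symm
    _ = Nat.card {p : (K × K) × (K × K × K) // 4 * p.1.1 ^ 3 + 27 * p.1.2 ^ 2 = 0} := by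
        simp only [Δ_shortModel, mul_eq_zero, h16, false_or]
    _ = Fintype.card K ^ 4 := by
        rw [Nat.card_congr (Equiv.prodSubtypeFstEquivSubtypeProd
          (p := fun v : K × K => 4 * v.1 ^ 3 + 27 * v.2 ^ 2 = 0)), Nat.card_prod, card_cusp h2 h3]
        simp only [Nat.card_eq_fintype_card, Fintype.card_prod]
        ring

theorem card_singular [Fintype K] :
    Nat.card {c : K × K × K × K × K // (coeffEquiv c).Δ = 0} = Fintype.card K ^ 4 := by
  by_cases h2 : (2 : K) = 0
  · have := (CharP.charP_iff_prime_eq_zero Nat.prime_two).2 h2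
    exact card_singular_of_char_two
  by_cases h3 : (3 : K) = 0
  · have := (CharP.charP_iff_prime_eq_zero Nat.prime_three).2 h3
    exact card_singular_of_char_three
  exact card_singular_of_two_ne_zero_of_three_ne_zero h2 h3

theorem card_nonsingular [Fintype K] :
    Nat.card {c : K × K × K × K × K // (coeffEquiv c).Δ ≠ 0} =
      Fintype.card K ^ 5 - Fintype.card K ^ 4 := by
  classical
  rw [Nat.card_eq_fintype_card, Fintype.card_subtype_compl,
    ← Nat.card_eq_fintype_card (α := {c // (coeffEquiv c).Δ = 0}), card_singular]
  congr 1
  simp only [Fintype.card_prod]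
  ring

end WeierstrassCurve

/-- **Lenstra.** Over a finite field `K` with `q` elements, the number of
quintuples `(a₁,a₂,a₃,a₄,a₆) ∈ K⁵` whose Weierstrass curve has nonzero discriminant is
`q⁵ − q⁴ = (q − 1)·q³·q`; equivalently the number with zero discriminant is `q⁴`. -/
theorem count_weierstrass_models
    (K : Type*) [Field K] [Fintype K] (q : ℕ) (hq : Fintype.card K = q) :
    Nat.card {c : K × K × K × K × K //
        (WeierstrassCurve.mk c.1 c.2.1 c.2.2.1 c.2.2.2.1 c.2.2.2.2).Δ ≠ 0}
      = q ^ 5 - q ^ 4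
    ∧ q ^ 5 - q ^ 4 = (q - 1) * q ^ 3 * q
    ∧ Nat.card {c : K × K × K × K × K //
        (WeierstrassCurve.mk c.1 c.2.1 c.2.2.1 c.2.2.2.1 c.2.2.2.2).Δ = 0}
      = q ^ 4 := by
  subst hq
  refine ⟨WeierstrassCurve.card_nonsingular, ?_, WeierstrassCurve.card_singular⟩
  rw [mul_assoc, ← pow_succ, Nat.sub_mul, one_mul, ← pow_succ']
end
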